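/- arXiv:quant-ph/0101144 — 7 statements merged into one kernel-verified Lean document; each statement's English description precedes it below -/
import Mathlib

section
/- Let O be a Hermitian operator on a finite-dimensional Hilbert space H, and let T be a trace-preserving completely positive linear map on operators of H satisfying T(O) = O. Let P₊ be the orthogonal projection onto the span of eigenvectors of O with positive eigenvalues, and define O₊ = P₊O and O₋ = −(1−P₊)O (both positive semidefinite). Then Tr[(1−P₊) T(O₊)] = 0 and Tr[P₊ T(O₋)] = 0. -/
/-! The positive parts `P * O` and `(P - 1) * O` are mapped to positive matrices, so
`Tr[(1 - P) T(O₊)]` and `Tr[P T(O₋)]` are nonnegative; since `T` preserves the trace and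
fixes `O = O₊ - O₋`, their sum is zero, hence both vanish. -/

open Matrix BigOperators
open scoped ComplexOrder

noncomputable section

def blockMap {n : Type*} [Fintype n] [DecidableEq n]
    (T : Matrix n n ℂ →ₗ[ℂ] Matrix n n ℂ) (k : ℕ)
    (M : Matrix (n × Fin k) (n × Fin k) ℂ) : Matrix (n × Fin k) (n × Fin k) ℂ :=
  Matrix.of fun p q => T (Matrix.of fun i j => M (i, p.2) (j, q.2)) p.1 q.1

namespace Matrix

variable {n : Type*} [Fintype n]

theorem blockMap_one_submatrix [DecidableEq n] (T : Matrix n n ℂ →ₗ[ℂ] Matrix n n ℂ)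
    (M : Matrix n n ℂ) :
    let e : n × Fin 1 ≃ n := Equiv.prodUnique n (Fin 1)
    blockMap T 1 (M.submatrix e e) = (T M).submatrix e e :=
  rfl

theorem PosSemidef.map_of_blockMap_one [DecidableEq n] {T : Matrix n n ℂ →ₗ[ℂ] Matrix n n ℂ}
    (hT : ∀ M : Matrix (n × Fin 1) (n × Fin 1) ℂ, M.PosSemidef → (blockMap T 1 M).PosSemidef)
    {M : Matrix n n ℂ} (hM : M.PosSemidef) : (T M).PosSemidef := by
  let e : n × Fin 1 ≃ n := Equiv.prodUnique n (Fin 1)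
  have h := hT _ (hM.submatrix e)
  rw [blockMap_one_submatrix] at h
  exact (posSemidef_submatrix_equiv e).mp h

theorem PosSemidef.trace_projection_mul_nonneg {𝕜 : Type*} [RCLike 𝕜] {R M : Matrix n n 𝕜}
    (hR : R.IsHermitian) (hRR : R * R = R) (hM : M.PosSemidef) : 0 ≤ (R * M).trace := by
  have h : (R * M * Rᴴ).trace = (R * M).trace := by
    rw [hR.eq, trace_mul_cycle, hRR]
  exact h ▸ (hM.mul_mul_conjTranspose_same R).trace_nonneg

theorem trace_one_sub_mul_map_add_trace_mul_map_eq_zero [DecidableEq n] {R : Type*} [CommRing R]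
    (T : Matrix n n R →ₗ[R] Matrix n n R) (htp : ∀ X, (T X).trace = X.trace)
    {O : Matrix n n R} (hTO : T O = O) (P : Matrix n n R) :
    ((1 - P) * T (P * O)).trace + (P * T ((P - 1) * O)).trace = 0 := by
  have hsplit : T ((P - 1) * O) = T (P * O) - O := by
    rw [sub_mul, one_mul, map_sub, hTO]
  rw [hsplit, sub_mul, one_mul, mul_sub, trace_sub, trace_sub, htp]
  ring

end Matrix

theorem stmt0_general {n : Type*} [Fintype n] [DecidableEq n]
    (O P : Matrix n n ℂ)
    (hPherm : P.IsHermitian) (hPproj : P * P = P)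
    (hpos : (P * O).PosSemidef)
    (hneg : ((P - 1) * O).PosSemidef)
    (T : Matrix n n ℂ →ₗ[ℂ] Matrix n n ℂ)
    (htp : ∀ X : Matrix n n ℂ, (T X).trace = X.trace)
    (hcp : ∀ k : ℕ, ∀ M : Matrix (n × Fin k) (n × Fin k) ℂ,
      M.PosSemidef → (blockMap T k M).PosSemidef)
    (hTO : T O = O) :
    ((1 - P) * T (P * O)).trace = 0 ∧ (P * T ((P - 1) * O)).trace = 0 := by
  have hQherm : (1 - P).IsHermitian := isHermitian_one.sub hPherm
  have hQproj : (1 - P) * (1 - P) = 1 - P := by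
    rw [mul_sub, sub_mul, sub_mul, hPproj, one_mul, mul_one, one_mul]; abel
  have ha := (hpos.map_of_blockMap_one (hcp 1)).trace_projection_mul_nonneg hQherm hQproj
  have hb := (hneg.map_of_blockMap_one (hcp 1)).trace_projection_mul_nonneg hPherm hPproj
  exact (add_eq_zero_iff_of_nonneg ha hb).mp
    (trace_one_sub_mul_map_add_trace_mul_map_eq_zero T htp hTO P)

/-- if a trace-preserving completely positive map `T` fixes a Hermitian
operator `O`, with positive/negative parts `O₊ = P*O`, `O₋ = (P-1)*O` (w.r.t. the
spectral projection `P` onto the strictly positive eigenvalues), then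
`Tr[(1-P) T(O₊)] = 0` and `Tr[P T(O₋)] = 0`. -/
theorem stmt0 {n : Type*} [Fintype n] [DecidableEq n]
    (O P : Matrix n n ℂ) (hO : O.IsHermitian)
    (hPherm : P.IsHermitian) (hPproj : P * P = P)
    (hcomm : P * O = O * P)
    (hpos : (P * O).PosSemidef)
    (hneg : ((P - 1) * O).PosSemidef)
    (hstrict : ∀ x : n → ℂ, P.mulVec x = x → x ≠ 0 →
      0 < (star x ⬝ᵥ O.mulVec x).re)
    (T : Matrix n n ℂ →ₗ[ℂ] Matrix n n ℂ)
    (htp : ∀ X : Matrix n n ℂ, (T X).trace = X.trace)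
    (hcp : ∀ k : ℕ, ∀ M : Matrix (n × Fin k) (n × Fin k) ℂ,
      M.PosSemidef → (blockMap T k M).PosSemidef)
    (hTO : T O = O) :
    ((1 - P) * T (P * O)).trace = 0 ∧ (P * T ((P - 1) * O)).trace = 0 :=
  stmt0_general O P hPherm hPproj hpos hneg T htp hcp hTO
end
end

section
/- Let O be a Hermitian operator on a finite-dimensional Hilbert space H, let E be another finite-dimensional Hilbert space with a fixed unit vector u, and let U : H ⊗ span{u} → H ⊗ E be an isometry such that Tr_E[U (O ⊗ |u⟩⟨u|) U†] = O. If P₊ denotes the spectral projection of O onto its positive eigenvalues, then [P₊ ⊗ 1_E, U] (P₊ ⊗ |u⟩⟨u|) = 0, i.e., ((1−P₊) ⊗ 1_E) U (P₊ ⊗ |u⟩⟨u|) = 0. -/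
open Matrix BigOperators Kronecker
open scoped ComplexOrder

noncomputable section

/-- Partial trace over the ancilla factor `e`. -/
def ptrE {n e : Type*} [Fintype n] [Fintype e]
    (M : Matrix (n × e) (n × e) ℂ) : Matrix n n ℂ :=
  Matrix.of fun i j => ∑ k, M (i, k) (j, k)

/-!
Write `Q = 1 - P` and `X = (P - 1) O`, so that `P O = O + X` with `P O ≥ 0` and `X ≥ 0`.
Because the channel preserves `O` and `V` is an isometry,
`tr[(Q ⊗ 1) V O Vᴴ] = tr[Q O] = -tr[V X Vᴴ]`; splitting `tr[V X Vᴴ]` along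
`P ⊗ 1 + Q ⊗ 1 = 1` gives
`tr[(Q ⊗ 1) V (P O) Vᴴ (Q ⊗ 1)] = -tr[(P ⊗ 1) V X Vᴴ (P ⊗ 1)]`.
The left side is `≥ 0` and the right side `≤ 0`, so both vanish and `(Q ⊗ 1) V (P O) = 0`.
Finally `O` is positive definite on the range of `P`, so `P O P + Q` is invertible, and
multiplying `(Q ⊗ 1) V P (P O P + Q) = (Q ⊗ 1) V (P O) P = 0` by its inverse gives the claim.
-/

namespace Matrix

variable {𝕜 m n : Type*} [RCLike 𝕜] [Fintype n]

open scoped MatrixOrder in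
theorem PosSemidef.mul_eq_zero_of_trace_mul_mul_conjTranspose_eq_zero [Fintype m]
    {A : Matrix n n 𝕜} (hA : A.PosSemidef) {C : Matrix m n 𝕜} (h : (C * A * Cᴴ).trace = 0) :
    C * A = 0 := by
  classical
  obtain ⟨B, rfl⟩ := CStarAlgebra.nonneg_iff_eq_star_mul_self.mp hA.nonneg
  have hCB : C * Bᴴ * (C * Bᴴ)ᴴ = 0 := by
    rw [conjTranspose_mul, conjTranspose_conjTranspose,
      ← (hA.mul_mul_conjTranspose_same C).trace_eq_zero_iff.mp h]
    simp only [star_eq_conjTranspose, Matrix.mul_assoc]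
  rw [star_eq_conjTranspose, ← Matrix.mul_assoc, self_mul_conjTranspose_eq_zero.mp hCB,
    Matrix.zero_mul]

theorem trace_mul_mul_self_of_mul_self {R N : Matrix n n 𝕜} (hR : R * R = R) :
    (R * N * R).trace = (R * N).trace := by
  rw [trace_mul_comm, ← Matrix.mul_assoc, hR]

variable [DecidableEq n]

theorem isUnit_mul_mul_add_one_sub {P O : Matrix n n 𝕜} (hP : P.IsHermitian) (hPP : P * P = P)
    (hO : ∀ x : n → 𝕜, P *ᵥ x = x → x ≠ 0 → 0 < RCLike.re (star x ⬝ᵥ O *ᵥ x)) :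
    IsUnit (P * O * P + (1 - P)) := by
  refine mulVec_injective_iff_isUnit.mp fun x y hxy => sub_eq_zero.mp ?_
  set d := x - y
  have hd : (P * O * P + (1 - P)) *ᵥ d = 0 := by rw [mulVec_sub, hxy, sub_self]
  have hPd : P *ᵥ d = d := by
    have hcompl : (1 - P) * (P * O * P + (1 - P)) = 1 - P := by
      simp only [Matrix.mul_add, Matrix.sub_mul, Matrix.mul_sub, Matrix.one_mul, Matrix.mul_one,
        ← Matrix.mul_assoc, hPP]
      abel
    have h := congrArg ((1 - P) *ᵥ ·) hd
    rw [mulVec_mulVec, hcompl, mulVec_zero, sub_mulVec, one_mulVec, sub_eq_zero] at h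
    exact h.symm
  have hPOd : P *ᵥ O *ᵥ d = 0 := by
    have hproj : P * (P * O * P + (1 - P)) = P * O * P := by
      simp only [Matrix.mul_add, Matrix.mul_sub, Matrix.mul_one, ← Matrix.mul_assoc, hPP,
        sub_self, add_zero]
    have h := congrArg (P *ᵥ ·) hd
    rwa [mulVec_mulVec, hproj, mulVec_zero, ← mulVec_mulVec, hPd, ← mulVec_mulVec] at h
  by_contra hne
  have h0 : star d ⬝ᵥ O *ᵥ d = 0 := calc
    star d ⬝ᵥ O *ᵥ d = star (P *ᵥ d) ⬝ᵥ O *ᵥ d := by rw [hPd]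
    _ = star d ⬝ᵥ P *ᵥ O *ᵥ d := by rw [star_mulVec, hP.eq, dotProduct_mulVec (star d) P]
    _ = 0 := by rw [hPOd, dotProduct_zero]
  simpa [h0] using hO d hPd hne

theorem mul_eq_zero_of_mul_mul_eq_zero {P O : Matrix n n 𝕜} (hP : P.IsHermitian)
    (hPP : P * P = P)
    (hO : ∀ x : n → 𝕜, P *ᵥ x = x → x ≠ 0 → 0 < RCLike.re (star x ⬝ᵥ O *ᵥ x))
    {C : Matrix m n 𝕜} (h : C * (P * O) = 0) : C * P = 0 := by
  have := (isUnit_mul_mul_add_one_sub hP hPP hO).invertible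
  refine mul_left_injective_of_invertible (P * O * P + (1 - P)) ?_
  change C * P * _ = 0 * _
  rw [Matrix.zero_mul]
  calc C * P * (P * O * P + (1 - P)) = C * (P * P) * O * P + C * (P - P * P) := by
        simp only [Matrix.mul_add, Matrix.mul_sub, Matrix.mul_one, Matrix.mul_assoc]
    _ = 0 := by
        rw [hPP, sub_self, Matrix.mul_zero, add_zero, Matrix.mul_assoc C P O, h, Matrix.zero_mul]

end Matrix

section PartialTrace

open Matrix

variable {n e : Type*} [Fintype n] [Fintype e] [DecidableEq e]

theorem trace_kronecker_one_mul (A : Matrix n n ℂ) (N : Matrix (n × e) (n × e) ℂ) :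
    ((A ⊗ₖ (1 : Matrix e e ℂ)) * N).trace = (A * ptrE N).trace := by
  simp only [trace, diag, mul_apply, ptrE, of_apply, kroneckerMap_apply, one_apply,
    Fintype.sum_prod_type, Finset.mul_sum, mul_ite, mul_one, mul_zero, ite_mul, zero_mul]
  refine Finset.sum_congr rfl fun i _ => ?_
  rw [Finset.sum_comm]
  refine Finset.sum_congr rfl fun j _ => ?_
  rw [Finset.sum_comm]
  simp

variable [DecidableEq n]

theorem trace_conj_kronecker_one_sub_eq_neg {P O : Matrix n n ℂ} (hP : P.IsHermitian)
    (hPP : P * P = P) {V : Matrix (n × e) n ℂ} (hiso : Vᴴ * V = 1)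
    (hpre : ptrE (V * O * Vᴴ) = O) :
    (((1 - P) ⊗ₖ (1 : Matrix e e ℂ)) * V * (P * O) *
        (((1 - P) ⊗ₖ (1 : Matrix e e ℂ)) * V)ᴴ).trace =
      -(((P ⊗ₖ (1 : Matrix e e ℂ)) * V * ((P - 1) * O) *
        ((P ⊗ₖ (1 : Matrix e e ℂ)) * V)ᴴ).trace) := by
  set Pk : Matrix (n × e) (n × e) ℂ := P ⊗ₖ 1
  set X := V * ((P - 1) * O) * Vᴴ
  have hQk : (1 - P) ⊗ₖ (1 : Matrix e e ℂ) = 1 - Pk := by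
    refine eq_sub_of_add_eq ?_
    rw [← add_kronecker, sub_add_cancel, one_kronecker_one]
  have hPkH : Pkᴴ = Pk := by
    rw [conjTranspose_kronecker, hP.eq, conjTranspose_one]
  have hPkPk : Pk * Pk = Pk := by
    rw [← mul_kronecker_mul, hPP, Matrix.one_mul]
  have hQkQk : (1 - Pk) * (1 - Pk) = 1 - Pk := by
    rw [Matrix.mul_sub, Matrix.sub_mul, Matrix.sub_mul, hPkPk]; simp
  have hweight : ((1 - Pk) * (V * O * Vᴴ)).trace = -X.trace := by
    rw [← hQk, trace_kronecker_one_mul, hpre, trace_mul_cycle, hiso, Matrix.one_mul,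
      ← trace_neg, ← Matrix.neg_mul, neg_sub]
  have hsplit : X.trace = (Pk * X).trace + ((1 - Pk) * X).trace := by
    rw [← trace_add, ← Matrix.add_mul, add_sub_cancel, Matrix.one_mul]
  have hPO : V * (P * O) * Vᴴ = V * O * Vᴴ + X := by
    simp only [X, Matrix.sub_mul, Matrix.mul_sub, Matrix.sub_mul, Matrix.one_mul]; abel
  rw [hQk]
  calc ((1 - Pk) * V * (P * O) * ((1 - Pk) * V)ᴴ).trace
      = ((1 - Pk) * (V * (P * O) * Vᴴ) * (1 - Pk)).trace := by
        rw [conjTranspose_mul, conjTranspose_sub, conjTranspose_one, hPkH]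
        simp only [Matrix.mul_assoc]
    _ = ((1 - Pk) * (V * O * Vᴴ)).trace + ((1 - Pk) * X).trace := by
        rw [trace_mul_mul_self_of_mul_self hQkQk, hPO, Matrix.mul_add, trace_add]
    _ = -(Pk * X * Pk).trace := by
        rw [hweight, hsplit, trace_mul_mul_self_of_mul_self hPkPk]; ring
    _ = -(Pk * V * ((P - 1) * O) * (Pk * V)ᴴ).trace := by
        rw [conjTranspose_mul, hPkH]
        simp only [X, Matrix.mul_assoc]

end PartialTrace

theorem stmt1_general {n e : Type*} [Fintype n] [DecidableEq n] [Fintype e] [DecidableEq e]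
    (O P : Matrix n n ℂ)
    (hPherm : P.IsHermitian) (hPproj : P * P = P)
    (hpos : (P * O).PosSemidef)
    (hneg : ((P - 1) * O).PosSemidef)
    (hstrict : ∀ x : n → ℂ, P.mulVec x = x → x ≠ 0 →
      0 < (star x ⬝ᵥ O.mulVec x).re)
    (V : Matrix (n × e) n ℂ) (hiso : Vᴴ * V = 1)
    (hpre : ptrE (V * O * Vᴴ) = O) :
    ((1 - P) ⊗ₖ (1 : Matrix e e ℂ)) * V * P = 0 := by
  have htrace := trace_conj_kronecker_one_sub_eq_neg hPherm hPproj hiso hpre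
  have hzero : (((1 - P) ⊗ₖ (1 : Matrix e e ℂ)) * V * (P * O) *
      (((1 - P) ⊗ₖ (1 : Matrix e e ℂ)) * V)ᴴ).trace = 0 :=
    le_antisymm (htrace ▸ neg_nonpos.mpr (hneg.mul_mul_conjTranspose_same _).trace_nonneg)
      (hpos.mul_mul_conjTranspose_same _).trace_nonneg
  exact mul_eq_zero_of_mul_mul_eq_zero hPherm hPproj hstrict
    (hpos.mul_eq_zero_of_trace_mul_mul_conjTranspose_eq_zero hzero)

/-- Lemma 1: if the isometry `V = U(· ⊗ |u⟩)` induces a channel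
`X ↦ Tr_E[V X Vᴴ]` preserving the Hermitian operator `O`, and `P` is the spectral
projection of `O` onto its strictly positive eigenvalues, then
`((1-P) ⊗ 1_E) U (P ⊗ |u⟩⟨u|) = 0`, i.e. `((1-P) ⊗ₖ 1) V P = 0`. -/
theorem stmt1 {n e : Type*} [Fintype n] [DecidableEq n] [Fintype e] [DecidableEq e]
    (O P : Matrix n n ℂ) (hO : O.IsHermitian)
    (hPherm : P.IsHermitian) (hPproj : P * P = P)
    (hcomm : P * O = O * P)
    (hpos : (P * O).PosSemidef)
    (hneg : ((P - 1) * O).PosSemidef)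
    (hstrict : ∀ x : n → ℂ, P.mulVec x = x → x ≠ 0 →
      0 < (star x ⬝ᵥ O.mulVec x).re)
    (V : Matrix (n × e) n ℂ) (hiso : Vᴴ * V = 1)
    (hpre : ptrE (V * O * Vᴴ) = O) :
    ((1 - P) ⊗ₖ (1 : Matrix e e ℂ)) * V * P = 0 :=
  stmt1_general O P hPherm hPproj hpos hneg hstrict V hiso hpre
end
end

section
/- Let ρ be a positive semidefinite operator on a finite-dimensional Hilbert space H whose support decomposes as an orthogonal direct sum H₁ ⊕ H₂, with orthogonal projections P₁, P₂ onto H₁, H₂. Let U : H ⊗ span{u} → H ⊗ E be an isometry satisfying Tr_E[U(ρ ⊗ |u⟩⟨u|)U†] = ρ and (P₂ ⊗ 1_E) U (P₁ ⊗ |u⟩⟨u|) = 0. Then also (P₁ ⊗ 1_E) U (P₂ ⊗ |u⟩⟨u|) = 0; that is, if U does not transfer H₁ into H₂, it does not transfer H₂ into H₁ either. -/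
/-!
Write `ρ = R Rᴴ` and `Π = P₂ ⊗ 1`. As `V` does not move `H₁` into `H₂` and `R` has range in
`H₁ ⊕ H₂`, `Π V R = Π V P₂ R`. Preservation of `ρ` under the partial trace gives
`‖Π V R‖² = Tr (P₂ ρ) = ‖P₂ R‖² = ‖V P₂ R‖²` (Hilbert–Schmidt norms), so the projection `Π`
does not shrink `V P₂ R`, which therefore lies in the range of `Π`, orthogonal to that of
`P₁ ⊗ 1`. Hence `(P₁ ⊗ 1) V P₂` vanishes on the range of `ρ`, i.e. on `H₁ ⊕ H₂ ⊇ H₂`.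
-/

open Matrix BigOperators Kronecker
open scoped ComplexOrder

noncomputable section

namespace Matrix

variable {m n : Type*} [Fintype n]

lemma trace_kronecker_one_mul {e : Type*} [Fintype e] [DecidableEq e]
    (P : Matrix n n ℂ) (M : Matrix (n × e) (n × e) ℂ) :
    ((P ⊗ₖ (1 : Matrix e e ℂ)) * M).trace = (P * ptrE M).trace := by
  simp only [trace, diag, mul_apply, ptrE, of_apply, kroneckerMap_apply, one_apply,
    Fintype.sum_prod_type, mul_ite, mul_one, mul_zero, ite_mul, zero_mul,
    Finset.sum_ite_eq, Finset.mem_univ, if_true, Finset.mul_sum]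
  exact Finset.sum_congr rfl fun i _ => Finset.sum_comm

lemma isStarProjection_kronecker_one {α e : Type*} [CommSemiring α] [StarRing α]
    [Fintype e] [DecidableEq e] {P : Matrix n n α} (hP : IsStarProjection P) :
    IsStarProjection (P ⊗ₖ (1 : Matrix e e α)) := by
  rw [isStarProjection_iff'] at hP ⊢
  refine ⟨?_, ?_⟩
  · rw [← mul_kronecker_mul, hP.1, one_mul]
  · rw [star_eq_conjTranspose, conjTranspose_kronecker, conjTranspose_one,
      ← star_eq_conjTranspose, hP.2]

lemma trace_mul_mul_conjTranspose_of_isStarProjection {α : Type*} [Fintype m] [CommSemiring α]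
    [StarRing α] {P : Matrix m m α} (hP : IsStarProjection P) (Y : Matrix m n α) :
    (P * Y * (P * Y)ᴴ).trace = (P * (Y * Yᴴ)).trace := by
  have hPh : Pᴴ = P := hP.isSelfAdjoint.star_eq
  rw [conjTranspose_mul, hPh, ← Matrix.mul_assoc, trace_mul_comm, ← Matrix.mul_assoc,
    ← Matrix.mul_assoc, hP.isIdempotentElem.eq, Matrix.mul_assoc]

lemma IsStarProjection.mul_eq_self_of_trace_eq {α : Type*} [CommRing α] [PartialOrder α]
    [StarRing α] [StarOrderedRing α] [NoZeroDivisors α] [Fintype m] [DecidableEq m]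
    {P : Matrix m m α} (hP : IsStarProjection P) {Y : Matrix m n α}
    (h : (P * (Y * Yᴴ)).trace = (Y * Yᴴ).trace) :
    P * Y = Y := by
  have hcompl : (1 - P) * Y = 0 := by
    rw [← trace_mul_conjTranspose_self_eq_zero_iff,
      trace_mul_mul_conjTranspose_of_isStarProjection hP.one_sub, Matrix.sub_mul, trace_sub,
      Matrix.one_mul, h, sub_self]
  rwa [Matrix.sub_mul, Matrix.one_mul, sub_eq_zero, eq_comm] at hcompl

lemma mul_eq_zero_of_mulVec_eq_zero_imp {α : Type*} [CommRing α] [StarRing α]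
    {A B : Matrix n n α} (hA : A.IsHermitian) (hB : B.IsHermitian)
    (h : ∀ x, A *ᵥ x = 0 → B *ᵥ x = 0) {C : Matrix m n α} (hCA : C * A = 0) :
    C * B = 0 := by
  refine funext fun i => ?_
  have hrow : A *ᵥ star (C i) = 0 := by
    rw [← hA.eq, ← star_vecMul, star_eq_zero]
    exact congrFun hCA i
  change C i ᵥ* B = 0
  rw [← star_eq_zero, star_vecMul, hB.eq]
  exact h _ hrow

lemma kronecker_one_mul_eq_self_of_ptrE_eq {k e : Type*} [Fintype k] [DecidableEq n]
    [Fintype e] [DecidableEq e] {P : Matrix n n ℂ} (hP : IsStarProjection P)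
    {V : Matrix (n × e) n ℂ} (hV : Vᴴ * V = 1) {R : Matrix n k ℂ}
    (hpre : ptrE (V * (R * Rᴴ) * Vᴴ) = R * Rᴴ)
    (hPVR : (P ⊗ₖ (1 : Matrix e e ℂ)) * V * R = (P ⊗ₖ (1 : Matrix e e ℂ)) * V * (P * R)) :
    (P ⊗ₖ (1 : Matrix e e ℂ)) * (V * (P * R)) = V * (P * R) := by
  set B := P ⊗ₖ (1 : Matrix e e ℂ)
  have hB : IsStarProjection B := isStarProjection_kronecker_one hP
  have hVX : ∀ X : Matrix n k ℂ, V * X * (V * X)ᴴ = V * (X * Xᴴ) * Vᴴ := fun X => by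
    simp only [conjTranspose_mul, Matrix.mul_assoc]
  refine hB.mul_eq_self_of_trace_eq ?_
  calc (B * (V * (P * R) * (V * (P * R))ᴴ)).trace
      = (B * V * R * (B * V * R)ᴴ).trace := by
        rw [← trace_mul_mul_conjTranspose_of_isStarProjection hB, ← Matrix.mul_assoc B V,
          ← hPVR]
    _ = (P * (R * Rᴴ)).trace := by
        rw [Matrix.mul_assoc B, trace_mul_mul_conjTranspose_of_isStarProjection hB, hVX,
          trace_kronecker_one_mul, hpre]
    _ = (V * (P * R) * (V * (P * R))ᴴ).trace := by
        rw [hVX, trace_mul_cycle, hV, Matrix.one_mul,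
          trace_mul_mul_conjTranspose_of_isStarProjection hP]

end Matrix

theorem stmt2_general {n e : Type*} [Fintype n] [DecidableEq n] [Fintype e] [DecidableEq e]
    (ρ : Matrix n n ℂ) (hρ : ρ.PosSemidef)
    (P₁ P₂ : Matrix n n ℂ)
    (h1h : P₁.IsHermitian)
    (h2h : P₂.IsHermitian) (h2p : P₂ * P₂ = P₂)
    (horth : P₁ * P₂ = 0)
    (hsupp : (P₁ + P₂) * ρ = ρ)
    (hker : ∀ x : n → ℂ, ρ.mulVec x = 0 → (P₁ + P₂).mulVec x = 0)
    (V : Matrix (n × e) n ℂ) (hiso : Vᴴ * V = 1)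
    (hpre : ptrE (V * ρ * Vᴴ) = ρ)
    (hno12 : (P₂ ⊗ₖ (1 : Matrix e e ℂ)) * V * P₁ = 0) :
    (P₁ ⊗ₖ (1 : Matrix e e ℂ)) * V * P₂ = 0 := by
  obtain ⟨R, rfl⟩ : ∃ R : Matrix n n ℂ, ρ = R * Rᴴ := by
    open MatrixOrder in exact CStarAlgebra.nonneg_iff_eq_mul_star_self.mp hρ.nonneg
  have hP₂P₁ : P₂ * P₁ = 0 := by
    simpa [h1h.eq, h2h.eq] using congrArg conjTranspose horth
  have hQR : (P₁ + P₂) * R = R := by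
    have h : (1 - (P₁ + P₂)) * R = 0 := by
      rw [← mul_self_mul_conjTranspose_eq_zero, Matrix.sub_mul, Matrix.one_mul, hsupp, sub_self]
    rwa [Matrix.sub_mul, Matrix.one_mul, sub_eq_zero, eq_comm] at h
  have hPVR :
      (P₂ ⊗ₖ (1 : Matrix e e ℂ)) * V * R = (P₂ ⊗ₖ (1 : Matrix e e ℂ)) * V * (P₂ * R) := by
    conv_lhs => rw [← hQR]
    rw [Matrix.add_mul, Matrix.mul_add, ← Matrix.mul_assoc _ P₁, hno12, Matrix.zero_mul, zero_add]
  have hVP₂R := kronecker_one_mul_eq_self_of_ptrE_eq ⟨h2p, h2h⟩ hiso hpre hPVR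
  have hvanish_ρ : (P₁ ⊗ₖ (1 : Matrix e e ℂ)) * V * P₂ * (R * Rᴴ) = 0 := by
    rw [← Matrix.mul_assoc, Matrix.mul_assoc _ P₂, Matrix.mul_assoc _ V, ← hVP₂R,
      ← Matrix.mul_assoc, ← mul_kronecker_mul, horth, zero_kronecker, Matrix.zero_mul,
      Matrix.zero_mul]
  have hvanish_supp :=
    mul_eq_zero_of_mulVec_eq_zero_imp hρ.isHermitian (h1h.add h2h) hker hvanish_ρ
  rwa [Matrix.mul_add, Matrix.mul_assoc _ P₂, Matrix.mul_assoc _ P₂, hP₂P₁, h2p, Matrix.mul_zero,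
    zero_add] at hvanish_supp

/-- Lemma 2: let `ρ ≥ 0` have support `H₁ ⊕ H₂` (projections `P₁, P₂`),
and let the isometry `V` preserve `ρ` and not transfer `H₁` into `H₂`
(`(P₂ ⊗ 1_E) U (P₁ ⊗ Σ_E) = 0`). Then it does not transfer `H₂` into `H₁` either. -/
theorem stmt2 {n e : Type*} [Fintype n] [DecidableEq n] [Fintype e] [DecidableEq e]
    (ρ : Matrix n n ℂ) (hρ : ρ.PosSemidef)
    (P₁ P₂ : Matrix n n ℂ)
    (h1h : P₁.IsHermitian) (h1p : P₁ * P₁ = P₁)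
    (h2h : P₂.IsHermitian) (h2p : P₂ * P₂ = P₂)
    (horth : P₁ * P₂ = 0)
    (hsupp : (P₁ + P₂) * ρ = ρ)
    (hker : ∀ x : n → ℂ, ρ.mulVec x = 0 → (P₁ + P₂).mulVec x = 0)
    (V : Matrix (n × e) n ℂ) (hiso : Vᴴ * V = 1)
    (hpre : ptrE (V * ρ * Vᴴ) = ρ)
    (hno12 : (P₂ ⊗ₖ (1 : Matrix e e ℂ)) * V * P₁ = 0) :
    (P₁ ⊗ₖ (1 : Matrix e e ℂ)) * V * P₂ = 0 :=
  stmt2_general ρ hρ P₁ P₂ h1h h2h h2p horth hsupp hker V hiso hpre hno12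
end
end

section
/- Let W be a partial isometry with W² = 0, support projection W†W onto K₁ and range projection WW† onto K₂, and let N be a positive semidefinite operator with support and image equal to K₁. Define P_± = [W†W + WW† ± (W+W†)]/2 and O = 4(P₊√N P₊)² − 4(P₋√N P₋)². Then O = WN + NW†, O² = WN²W† + N², and the support of O equals K₁ ⊕ K₂; moreover P₊ is the spectral projection of O onto its positive eigenvalues. -/
open Matrix
open scoped ComplexOrder

noncomputable section

def Matrix.PosSemidef.sqrt {n 𝕜 : Type*} [Fintype n] [DecidableEq n] [RCLike 𝕜]
    {A : Matrix n n 𝕜} (hA : A.PosSemidef) : Matrix n n 𝕜 :=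
  hA.1.eigenvectorUnitary.1 * diagonal ((↑) ∘ (Real.sqrt ·) ∘ hA.1.eigenvalues) *
  (star hA.1.eigenvectorUnitary : Matrix n n 𝕜)

/-!
Write `S = W†W`. Because `√N` has the same support as `N`, the relations `W†N = 0`, `SN = N`
pass to `√N`: `W†√N = 0` and `S√N = √N`, and dually on the right. They give
`P₊√N P₊ = ¼ (1 + W) √N (1 + W†)`, hence `4 (P₊√N P₊)² = ½ (1 + W) N (1 + W†)`; since `P₋` is
`P₊` for `-W`, subtracting yields `O = WN + NW†`. The same relations give
`P₊O = OP₊ = ½ (1 + W) N (1 + W)†` and `(P₊ - 1) O = ½ (1 - W) N (1 - W)†`, both positive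
semidefinite. Finally `W†O = N` and `SO = NW†`, so `Ox = 0` forces `Nx = N W†x = 0`, hence
`(W†W + WW†) x = 0`; as `P₊ = P₊ (W†W + WW†)`, `O` is strictly positive on the range of `P₊`.
-/

namespace SqZeroPartialIsometry

variable (𝕜 : Type*) {R : Type*} [Field 𝕜] [Ring R] [Algebra 𝕜 R]

/-- The paper's `P₊`, with `V` in the role of `W†`; its `P₋` is `plusProj 𝕜 (-W) (-V)`. -/
def plusProj (W V : R) : R := (2 : 𝕜)⁻¹ • (V * W + W * V + (W + V))

variable {𝕜}

/-- The paper's `O`; it exchanges `K₁` and `K₂`, whence the name. -/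
def offDiag (W V N : R) : R := W * N + N * V

variable {W V A N : R}

theorem plusProj_neg : plusProj 𝕜 (-W) (-V) = (2 : 𝕜)⁻¹ • (V * W + W * V - (W + V)) := by
  rw [plusProj, neg_mul_neg, neg_mul_neg, ← neg_add, ← sub_eq_add_neg]

theorem plusProj_mul_mul_plusProj (hVA : V * A = 0) (hVWA : V * W * A = A) (hAW : A * W = 0)
    (hAVW : A * V * W = A) :
    plusProj 𝕜 W V * A * plusProj 𝕜 W V = (4 : 𝕜)⁻¹ • ((1 + W) * A * (1 + V)) := by
  have hXA : (V * W + W * V + (W + V)) * A = (1 + W) * A := calc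
    _ = V * W * A + W * (V * A) + W * A + V * A := by noncomm_ring
    _ = (1 + W) * A := by rw [hVWA, hVA]; noncomm_ring
  have hAX : A * (V * W + W * V + (W + V)) = A * (1 + V) := calc
    _ = A * V * W + A * W * V + A * W + A * V := by noncomm_ring
    _ = A * (1 + V) := by rw [hAVW, hAW]; noncomm_ring
  calc plusProj 𝕜 W V * A * plusProj 𝕜 W V
      = ((2 : 𝕜)⁻¹ * (2 : 𝕜)⁻¹) •
          ((V * W + W * V + (W + V)) * A * (V * W + W * V + (W + V))) := by
        rw [plusProj, smul_mul_assoc, smul_mul_assoc, mul_smul_comm, smul_smul]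
    _ = (4 : 𝕜)⁻¹ • ((1 + W) * A * (1 + V)) := by
        rw [hXA, mul_assoc, hAX, ← mul_assoc, ← mul_inv]; norm_num

theorem four_smul_sq_plusProj_mul_mul_plusProj [CharZero 𝕜] (hVA : V * A = 0)
    (hVWA : V * W * A = A) (hAW : A * W = 0) (hAVW : A * V * W = A) :
    (4 : 𝕜) • ((plusProj 𝕜 W V * A * plusProj 𝕜 W V) * (plusProj 𝕜 W V * A * plusProj 𝕜 W V))
      = (2 : 𝕜)⁻¹ • ((1 + W) * (A * A) * (1 + V)) := by
  have hmid : A * (1 + V) * ((1 + W) * A) = A * A + A * A := calc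
    _ = A * A + A * W * A + A * (V * A) + A * V * W * A := by noncomm_ring
    _ = A * A + A * A := by rw [hAW, hVA, hAVW]; noncomm_ring
  calc (4 : 𝕜) • ((plusProj 𝕜 W V * A * plusProj 𝕜 W V) * (plusProj 𝕜 W V * A * plusProj 𝕜 W V))
      = (4 : 𝕜)⁻¹ • ((1 + W) * (A * (1 + V) * ((1 + W) * A)) * (1 + V)) := by
        rw [plusProj_mul_mul_plusProj hVA hVWA hAW hAVW, smul_mul_smul_comm, smul_smul]
        norm_num [mul_assoc]
    _ = (2 : 𝕜)⁻¹ • ((1 + W) * (A * A) * (1 + V)) := by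
        rw [hmid, ← two_smul 𝕜, mul_smul_comm, smul_mul_assoc, smul_smul]; norm_num

theorem four_smul_sq_plusProj_sub_four_smul_sq_plusProj_neg [CharZero 𝕜] (hVA : V * A = 0)
    (hVWA : V * W * A = A) (hAW : A * W = 0) (hAVW : A * V * W = A) :
    (4 : 𝕜) • ((plusProj 𝕜 W V * A * plusProj 𝕜 W V) * (plusProj 𝕜 W V * A * plusProj 𝕜 W V))
      - (4 : 𝕜) • ((plusProj 𝕜 (-W) (-V) * A * plusProj 𝕜 (-W) (-V)) *
          (plusProj 𝕜 (-W) (-V) * A * plusProj 𝕜 (-W) (-V)))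
      = offDiag W V (A * A) := by
  rw [four_smul_sq_plusProj_mul_mul_plusProj hVA hVWA hAW hAVW,
    four_smul_sq_plusProj_mul_mul_plusProj (by rw [neg_mul, hVA, neg_zero])
      (by rw [neg_mul_neg, hVWA]) (by rw [mul_neg, hAW, neg_zero])
      (by rw [mul_neg A V, neg_mul_neg, hAVW]), ← smul_sub]
  have hdiff : (1 + W) * (A * A) * (1 + V) - (1 + -W) * (A * A) * (1 + -V)
      = offDiag W V (A * A) + offDiag W V (A * A) := by rw [offDiag]; noncomm_ring
  rw [hdiff, ← two_smul 𝕜, smul_smul]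
  norm_num

theorem offDiag_mul_offDiag (hNW : N * W = 0) (hVN : V * N = 0) (hNVW : N * (V * W) = N) :
    offDiag W V N * offDiag W V N = W * (N * N) * V + N * N := calc
  _ = W * (N * W) * N + W * N * N * V + N * (V * W) * N + N * (V * N) * V := by
    rw [offDiag]; noncomm_ring
  _ = W * (N * N) * V + N * N := by rw [hNW, hVN, hNVW]; noncomm_ring

theorem add_mul_offDiag (hWW : W * W = 0) (hVN : V * N = 0) (hVWN : V * W * N = N)
    (hWVW : W * V * W = W) :
    (V * W + W * V) * offDiag W V N = offDiag W V N := calc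
  _ = V * (W * W) * N + V * W * N * V + W * V * W * N + W * (V * N) * V := by
    rw [offDiag]; noncomm_ring
  _ = offDiag W V N := by rw [hWW, hVN, hVWN, hWVW, offDiag]; noncomm_ring

theorem mul_offDiag (hVN : V * N = 0) (hVWN : V * W * N = N) : V * offDiag W V N = N := calc
  _ = V * W * N + V * N * V := by rw [offDiag]; noncomm_ring
  _ = N := by rw [hVWN, hVN, zero_mul, add_zero]

theorem mul_mul_offDiag (hWW : W * W = 0) (hVWN : V * W * N = N) :
    V * W * offDiag W V N = N * V := calc
  _ = V * (W * W) * N + V * W * N * V := by rw [offDiag]; noncomm_ring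
  _ = N * V := by rw [hWW, hVWN, mul_zero, zero_mul, zero_add]

theorem plusProj_mul_offDiag (hWW : W * W = 0) (hVN : V * N = 0) (hVWN : V * W * N = N)
    (hWVW : W * V * W = W) :
    plusProj 𝕜 W V * offDiag W V N = (2 : 𝕜)⁻¹ • ((1 + W) * N * (1 + V)) := by
  rw [plusProj, smul_mul_assoc]
  congr 1
  calc _ = V * (W * W) * N + V * W * N * V + W * V * W * N + W * (V * N) * V + W * W * N
        + W * N * V + V * W * N + V * N * V := by rw [offDiag]; noncomm_ring
    _ = (1 + W) * N * (1 + V) := by rw [hWW, hVN, hVWN, hWVW]; noncomm_ring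

theorem offDiag_mul_plusProj (hVV : V * V = 0) (hNW : N * W = 0) (hNVW : N * (V * W) = N) :
    offDiag W V N * plusProj 𝕜 W V = (2 : 𝕜)⁻¹ • ((1 + W) * N * (1 + V)) := by
  rw [plusProj, mul_smul_comm]
  congr 1
  calc _ = W * (N * (V * W)) + W * (N * W) * V + N * (V * V) * W + N * (V * W) * V
        + W * (N * W) + W * N * V + N * (V * W) + N * (V * V) := by rw [offDiag]; noncomm_ring
    _ = (1 + W) * N * (1 + V) := by rw [hVV, hNW, hNVW]; noncomm_ring

theorem plusProj_sub_one_mul_offDiag [CharZero 𝕜] (hWW : W * W = 0) (hVN : V * N = 0)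
    (hVWN : V * W * N = N) (hWVW : W * V * W = W) :
    (plusProj 𝕜 W V - 1) * offDiag W V N = (2 : 𝕜)⁻¹ • ((1 - W) * N * (1 - V)) := by
  rw [sub_mul, one_mul, plusProj_mul_offDiag hWW hVN hVWN hWVW]
  have h : (1 + W) * N * (1 + V) = (1 - W) * N * (1 - V) + (2 : 𝕜) • offDiag W V N := by
    rw [two_smul, offDiag]; noncomm_ring
  rw [h, smul_add, smul_smul]
  norm_num

theorem plusProj_mul_add (hWW : W * W = 0) (hVV : V * V = 0) (hWVW : W * V * W = W)
    (hVWV : V * W * V = V) :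
    plusProj 𝕜 W V * (V * W + W * V) = plusProj 𝕜 W V := by
  rw [plusProj, smul_mul_assoc]
  congr 1
  calc _ = V * W * V * W + V * (W * W) * V + W * (V * V) * W + W * V * W * V + W * V * W
        + W * W * V + V * V * W + V * W * V := by noncomm_ring
    _ = V * W + W * V + (W + V) := by rw [hWW, hVV, hWVW, hVWV]; noncomm_ring

end SqZeroPartialIsometry

open SqZeroPartialIsometry

namespace Matrix

variable {n m 𝕜 : Type*} [Fintype n] [RCLike 𝕜]

theorem PosSemidef.re_dotProduct_mulVec_pos {M : Matrix n n 𝕜} (hM : M.PosSemidef)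
    {x : n → 𝕜} (h : M *ᵥ x ≠ 0) : 0 < RCLike.re (star x ⬝ᵥ M *ᵥ x) := by
  have hne : star x ⬝ᵥ M *ᵥ x ≠ 0 := by rwa [Ne, hM.dotProduct_mulVec_zero_iff]
  exact (RCLike.pos_iff.mp (lt_of_le_of_ne (hM.dotProduct_mulVec_nonneg x) hne.symm)).1

theorem re_dotProduct_mulVec_pos_of_mulVec_eq_self {P O Q : Matrix n n 𝕜}
    (hPO : (P * O).PosSemidef) (hcomm : P * O = O * P) (hker : ∀ x, O *ᵥ x = 0 → Q *ᵥ x = 0)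
    (hPQ : P * Q = P) {x : n → 𝕜} (hPx : P *ᵥ x = x) (hx : x ≠ 0) :
    0 < RCLike.re (star x ⬝ᵥ O *ᵥ x) := by
  have hOx : (P * O) *ᵥ x = O *ᵥ x := by rw [hcomm, ← mulVec_mulVec, hPx]
  rw [← hOx]
  refine hPO.re_dotProduct_mulVec_pos fun h0 => hx ?_
  rw [hOx] at h0
  rw [← hPx, ← hPQ, ← mulVec_mulVec, hker x h0, mulVec_zero]

variable [DecidableEq n]

theorem add_mulVec_eq_zero_of_offDiag_mulVec_eq_zero {R : Type*} [Ring R]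
    {W V N : Matrix n n R} (hWW : W * W = 0) (hVN : V * N = 0) (hVWN : V * W * N = N)
    (hVWV : V * W * V = V) (hNker : ∀ x, N *ᵥ x = 0 → (V * W) *ᵥ x = 0) {x : n → R}
    (hx : offDiag W V N *ᵥ x = 0) : (V * W + W * V) *ᵥ x = 0 := by
  have hNx : N *ᵥ x = 0 := by rw [← mul_offDiag hVN hVWN, ← mulVec_mulVec, hx, mulVec_zero]
  have hNVx : N *ᵥ (V *ᵥ x) = 0 := by
    rw [mulVec_mulVec, ← mul_mul_offDiag hWW hVWN, ← mulVec_mulVec, hx, mulVec_zero]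
  have hVx : V *ᵥ x = 0 := by simpa only [mulVec_mulVec, hVWV] using hNker _ hNVx
  rw [add_mulVec, hNker x hNx, ← mulVec_mulVec, hVx, mulVec_zero, add_zero]

namespace PosSemidef

variable {N : Matrix n n 𝕜}

open scoped MatrixOrder in
theorem sqrt_eq_cfcSqrt (hN : N.PosSemidef) : hN.sqrt = CFC.sqrt N := by
  rw [CFC.sqrt_eq_real_sqrt N hN.nonneg, cfcₙ_eq_cfc, hN.1.cfc_eq]
  rfl

open scoped MatrixOrder in
theorem conjTranspose_sqrt (hN : N.PosSemidef) : hN.sqrtᴴ = hN.sqrt := by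
  rw [sqrt_eq_cfcSqrt]
  exact (CFC.sqrt_nonneg N).isSelfAdjoint

open scoped MatrixOrder in
theorem sqrt_mul_sqrt (hN : N.PosSemidef) : hN.sqrt * hN.sqrt = N := by
  rw [sqrt_eq_cfcSqrt]
  exact CFC.sqrt_mul_sqrt_self N hN.nonneg

theorem mul_sqrt_eq_zero (hN : N.PosSemidef) {B : Matrix m n 𝕜} (h : B * N = 0) :
    B * hN.sqrt = 0 := by
  refine self_mul_conjTranspose_eq_zero.mp ?_
  rw [conjTranspose_mul, conjTranspose_sqrt, ← Matrix.mul_assoc, Matrix.mul_assoc B,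
    sqrt_mul_sqrt, h, Matrix.zero_mul]

theorem mul_sqrt_eq_sqrt (hN : N.PosSemidef) {B : Matrix n n 𝕜} (h : B * N = N) :
    B * hN.sqrt = hN.sqrt := by
  have h' := hN.mul_sqrt_eq_zero (B := B - 1) (by rw [sub_mul, h, one_mul, sub_self])
  rwa [sub_mul, one_mul, sub_eq_zero] at h'

theorem sandwich_sqrt_eq_offDiag (hN : N.PosSemidef) {W : Matrix n n 𝕜}
    (hVN : Wᴴ * N = 0) (hVWN : Wᴴ * W * N = N) :
    (4 : 𝕜) • ((plusProj 𝕜 W Wᴴ * hN.sqrt * plusProj 𝕜 W Wᴴ) *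
        (plusProj 𝕜 W Wᴴ * hN.sqrt * plusProj 𝕜 W Wᴴ))
      - (4 : 𝕜) • ((plusProj 𝕜 (-W) (-Wᴴ) * hN.sqrt * plusProj 𝕜 (-W) (-Wᴴ)) *
          (plusProj 𝕜 (-W) (-Wᴴ) * hN.sqrt * plusProj 𝕜 (-W) (-Wᴴ)))
      = offDiag W Wᴴ N := by
  have hVA : Wᴴ * hN.sqrt = 0 := hN.mul_sqrt_eq_zero hVN
  have hVWA : Wᴴ * W * hN.sqrt = hN.sqrt := hN.mul_sqrt_eq_sqrt hVWN
  have hAW : hN.sqrt * W = 0 := by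
    simpa only [conjTranspose_mul, conjTranspose_conjTranspose, hN.conjTranspose_sqrt,
      conjTranspose_zero] using congrArg (·ᴴ) hVA
  have hAVW : hN.sqrt * Wᴴ * W = hN.sqrt := by
    simpa only [conjTranspose_mul, conjTranspose_conjTranspose, hN.conjTranspose_sqrt,
      Matrix.mul_assoc] using congrArg (·ᴴ) hVWA
  have h := four_smul_sq_plusProj_sub_four_smul_sq_plusProj_neg (𝕜 := 𝕜) hVA hVWA hAW hAVW
  rwa [hN.sqrt_mul_sqrt] at h

end PosSemidef

end Matrix

/-- let `W` be a partial isometry with `W² = 0`, support projection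
`WᴴW` (onto `K₁`) and range projection `WWᴴ` (onto `K₂`), and let `N ≥ 0` have
support and image `K₁`. With `P± = [WᴴW + WWᴴ ± (W+Wᴴ)]/2` and
`O = 4(P₊√N P₊)² − 4(P₋√N P₋)²` one has `O = WN + NWᴴ`, `O² = WN²Wᴴ + N²`,
`Supp O = K₁ ⊕ K₂`, and `P₊` is the spectral projection of `O` onto its
positive eigenvalues. -/
theorem stmt6 {n : Type*} [Fintype n] [DecidableEq n]
    (W N : Matrix n n ℂ) (hpi : W * Wᴴ * W = W) (hW2 : W * W = 0)
    (hN : N.PosSemidef)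
    (hNsupp : N * (Wᴴ * W) = N) (hNsupp' : (Wᴴ * W) * N = N)
    (hNker : ∀ x : n → ℂ, N.mulVec x = 0 → (Wᴴ * W).mulVec x = 0) :
    (let Pp := ((2 : ℂ)⁻¹) • (Wᴴ * W + W * Wᴴ + (W + Wᴴ))
     let Pm := ((2 : ℂ)⁻¹) • (Wᴴ * W + W * Wᴴ - (W + Wᴴ))
     let O := (4 : ℂ) • ((Pp * hN.sqrt * Pp) * (Pp * hN.sqrt * Pp))
            - (4 : ℂ) • ((Pm * hN.sqrt * Pm) * (Pm * hN.sqrt * Pm))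
     O = W * N + N * Wᴴ ∧
     O * O = W * (N * N) * Wᴴ + N * N ∧
     (Wᴴ * W + W * Wᴴ) * O = O ∧
     (∀ x : n → ℂ, O.mulVec x = 0 → (Wᴴ * W + W * Wᴴ).mulVec x = 0) ∧
     Pp * O = O * Pp ∧ (Pp * O).PosSemidef ∧ ((Pp - 1) * O).PosSemidef ∧
     (∀ x : n → ℂ, Pp.mulVec x = x → x ≠ 0 → 0 < (star x ⬝ᵥ O.mulVec x).re)) := by
  intro Pp Pm O
  have hVV : Wᴴ * Wᴴ = 0 := by rw [← conjTranspose_mul, hW2, conjTranspose_zero]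
  have hVWV : Wᴴ * W * Wᴴ = Wᴴ := by
    simpa only [conjTranspose_mul, conjTranspose_conjTranspose, Matrix.mul_assoc]
      using congrArg conjTranspose hpi
  have hVN : Wᴴ * N = 0 := by
    rw [← hNsupp', ← Matrix.mul_assoc, ← Matrix.mul_assoc, hVV, Matrix.zero_mul, Matrix.zero_mul]
  have hNW : N * W = 0 := by
    rw [← hN.1.eq, ← conjTranspose_conjTranspose W, ← conjTranspose_mul, hVN, conjTranspose_zero]
  have hO : O = offDiag W Wᴴ N := by
    rw [← hN.sandwich_sqrt_eq_offDiag hVN hNsupp', plusProj_neg]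
    rfl
  have hPO : Pp * O = (2 : ℂ)⁻¹ • ((1 + W) * N * (1 + W)ᴴ) := by
    rw [hO, conjTranspose_add, conjTranspose_one]
    exact plusProj_mul_offDiag hW2 hVN hNsupp' hpi
  have hOP : O * Pp = Pp * O := by
    rw [hPO, hO, conjTranspose_add, conjTranspose_one]
    exact offDiag_mul_plusProj hVV hNW hNsupp
  have hker (x : n → ℂ) (hx : O *ᵥ x = 0) : (Wᴴ * W + W * Wᴴ) *ᵥ x = 0 :=
    add_mulVec_eq_zero_of_offDiag_mulVec_eq_zero hW2 hVN hNsupp' hVWV hNker (hO ▸ hx)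
  have hPOpos : (Pp * O).PosSemidef := hPO ▸ (hN.mul_mul_conjTranspose_same _).smul (by positivity)
  refine ⟨hO, ?_, ?_, hker, hOP.symm, hPOpos, ?_, fun x hPx hx => ?_⟩
  · rw [hO]; exact offDiag_mul_offDiag hNW hVN hNsupp
  · rw [hO]; exact add_mul_offDiag hW2 hVN hNsupp' hpi
  · have hPO' : (Pp - 1) * O = (2 : ℂ)⁻¹ • ((1 - W) * N * (1 - W)ᴴ) := by
      rw [hO, conjTranspose_sub, conjTranspose_one]
      exact plusProj_sub_one_mul_offDiag hW2 hVN hNsupp' hpi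
    exact hPO' ▸ (hN.mul_mul_conjTranspose_same _).smul (by positivity)
  · exact re_dotProduct_mulVec_pos_of_mulVec_eq_self hPOpos hOP.symm hker
      (plusProj_mul_add hW2 hVV hpi hVWV) hPx hx
end
end

section
/- Let ρ be a density operator with support H₁ ⊕ H₂ (H₁, H₂ orthogonal with projections P₁, P₂), and let U₁ ⊕ U₂ be an isometry acting blockwise on H₁ and H₂ (tensored with an ancilla prepared in |u⟩⟨u|) that preserves ρ, i.e., T_{U₁⊕U₂}(ρ) = ρ. Then for all i, j ∈ {1,2}, T_{U₁⊕U₂}(P_i ρ P_j) = P_i ρ P_j; in particular the off-diagonal block P₂ρP₁ is preserved. -/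
open Matrix BigOperators Kronecker
open scoped ComplexOrder

noncomputable section

lemma ptrE_conj {n e : Type*} [Fintype n] [DecidableEq n] [Fintype e] [DecidableEq e]
    (P Q : Matrix n n ℂ) (M : Matrix (n × e) (n × e) ℂ) :
    ptrE ((P ⊗ₖ (1 : Matrix e e ℂ)) * M * (Q ⊗ₖ (1 : Matrix e e ℂ))) = P * ptrE M * Q := by
  ext i j
  simp only [ptrE, Matrix.of_apply, Matrix.mul_apply, kroneckerMap_apply,
    Fintype.sum_prod_type, Matrix.one_apply, mul_ite, mul_zero, mul_one, ite_mul, zero_mul,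
    Finset.sum_ite_eq, Finset.sum_ite_eq', Finset.mem_univ, if_true,
    Finset.mul_sum, Finset.sum_mul]
  rw [Finset.sum_comm]
  refine Finset.sum_congr rfl fun c _ => ?_
  rw [Finset.sum_comm]

/-- if a blockwise isometry `U₁ ⊕ U₂` (with blocks `H₁, H₂`,
projections `P₁, P₂`, `P₁ + P₂ = 1` on the support of the density operator `ρ`)
preserves `ρ`, then it preserves every block `P_i ρ P_j` (i, j ∈ {1,2}),
in particular the off-diagonal block `P₂ρP₁`. -/
theorem stmt8 {n e : Type*} [Fintype n] [DecidableEq n] [Fintype e] [DecidableEq e]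
    (ρ : Matrix n n ℂ) (hρ : ρ.PosSemidef) (htr : ρ.trace = 1)
    (P₁ P₂ : Matrix n n ℂ)
    (h1h : P₁.IsHermitian) (h1p : P₁ * P₁ = P₁)
    (h2h : P₂.IsHermitian) (h2p : P₂ * P₂ = P₂)
    (horth : P₁ * P₂ = 0) (hsum : P₁ + P₂ = 1)
    (hfull : ∀ x : n → ℂ, ρ.mulVec x = 0 → x = 0)
    (V : Matrix (n × e) n ℂ) (hiso : Vᴴ * V = 1)
    (hblock12 : (P₂ ⊗ₖ (1 : Matrix e e ℂ)) * V * P₁ = 0)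
    (hblock21 : (P₁ ⊗ₖ (1 : Matrix e e ℂ)) * V * P₂ = 0)
    (hpre : ptrE (V * ρ * Vᴴ) = ρ) :
    ∀ i j : Fin 2,
      ptrE (V * ((![P₁, P₂] i) * ρ * (![P₁, P₂] j)) * Vᴴ)
        = (![P₁, P₂] i) * ρ * (![P₁, P₂] j) := by
  have hQsum : (P₁ ⊗ₖ (1 : Matrix e e ℂ)) + (P₂ ⊗ₖ (1 : Matrix e e ℂ)) = 1 := by
    rw [← Matrix.add_kronecker, hsum, Matrix.one_kronecker_one]
  have hV1 : V * P₁ = (P₁ ⊗ₖ (1 : Matrix e e ℂ)) * V * P₁ := by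
    conv_lhs => rw [← Matrix.one_mul (V * P₁), ← hQsum]
    rw [Matrix.add_mul, ← Matrix.mul_assoc, ← Matrix.mul_assoc, hblock12, add_zero]
  have hV2 : V * P₂ = (P₂ ⊗ₖ (1 : Matrix e e ℂ)) * V * P₂ := by
    conv_lhs => rw [← Matrix.one_mul (V * P₂), ← hQsum]
    rw [Matrix.add_mul, ← Matrix.mul_assoc, ← Matrix.mul_assoc, hblock21, zero_add]
  have hQ1 : (P₁ ⊗ₖ (1 : Matrix e e ℂ)) * V = V * P₁ := by
    conv_lhs => rw [← Matrix.mul_one V, ← hsum]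
    rw [show (P₁ ⊗ₖ (1 : Matrix e e ℂ)) * (V * (P₁ + P₂))
        = (P₁ ⊗ₖ (1 : Matrix e e ℂ)) * V * P₁ + (P₁ ⊗ₖ (1 : Matrix e e ℂ)) * V * P₂ by
      rw [Matrix.mul_add, Matrix.mul_add, Matrix.mul_assoc, Matrix.mul_assoc]]
    rw [hblock21, add_zero, ← hV1]
  have hQ2 : (P₂ ⊗ₖ (1 : Matrix e e ℂ)) * V = V * P₂ := by
    conv_lhs => rw [← Matrix.mul_one V, ← hsum]
    rw [show (P₂ ⊗ₖ (1 : Matrix e e ℂ)) * (V * (P₁ + P₂))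
        = (P₂ ⊗ₖ (1 : Matrix e e ℂ)) * V * P₁ + (P₂ ⊗ₖ (1 : Matrix e e ℂ)) * V * P₂ by
      rw [Matrix.mul_add, Matrix.mul_add, Matrix.mul_assoc, Matrix.mul_assoc]]
    rw [hblock12, zero_add, ← hV2]
  have hkH : ∀ P : Matrix n n ℂ, P.IsHermitian → (P ⊗ₖ (1 : Matrix e e ℂ))ᴴ = P ⊗ₖ 1 := by
    intro P hP
    ext ⟨a, k⟩ ⟨b, l⟩
    simp [Matrix.conjTranspose_apply, Matrix.one_apply, kroneckerMap_apply, star_mul',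
      apply_ite, hP.apply]
    split_ifs with h <;> intro h2 <;> [exact absurd h.symm h2; exact absurd h2.symm h]
  have hQ1' : Vᴴ * (P₁ ⊗ₖ (1 : Matrix e e ℂ)) = P₁ * Vᴴ := by
    have := congrArg Matrix.conjTranspose hQ1
    rwa [Matrix.conjTranspose_mul, Matrix.conjTranspose_mul, hkH P₁ h1h, h1h.eq] at this
  have hQ2' : Vᴴ * (P₂ ⊗ₖ (1 : Matrix e e ℂ)) = P₂ * Vᴴ := by
    have := congrArg Matrix.conjTranspose hQ2
    rwa [Matrix.conjTranspose_mul, Matrix.conjTranspose_mul, hkH P₂ h2h, h2h.eq] at this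
  have key : ∀ P Q : Matrix n n ℂ,
      (P ⊗ₖ (1 : Matrix e e ℂ)) * V = V * P → Vᴴ * (Q ⊗ₖ (1 : Matrix e e ℂ)) = Q * Vᴴ →
      ptrE (V * (P * ρ * Q) * Vᴴ) = P * ρ * Q := by
    intro P Q hP hQ
    have h : V * (P * ρ * Q) * Vᴴ
        = (P ⊗ₖ (1 : Matrix e e ℂ)) * (V * ρ * Vᴴ) * (Q ⊗ₖ (1 : Matrix e e ℂ)) := by
      have e1 : V * (P * ρ * Q) * Vᴴ = (V * P) * ρ * (Q * Vᴴ) := by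
        simp only [Matrix.mul_assoc]
      have e2 : (P ⊗ₖ (1 : Matrix e e ℂ)) * (V * ρ * Vᴴ) * (Q ⊗ₖ (1 : Matrix e e ℂ))
          = ((P ⊗ₖ (1 : Matrix e e ℂ)) * V) * ρ * (Vᴴ * (Q ⊗ₖ (1 : Matrix e e ℂ))) := by
        simp only [Matrix.mul_assoc]
      rw [e1, e2, hP, hQ]
    rw [h, ptrE_conj, hpre]
  intro i j
  fin_cases i <;> fin_cases j <;>
    simp only [Matrix.cons_val_zero, Matrix.cons_val_one, Matrix.head_cons] <;>
    [exact key P₁ P₁ hQ1 hQ1'; exact key P₁ P₂ hQ1 hQ2'; exact key P₂ P₁ hQ2 hQ1';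
     exact key P₂ P₂ hQ2 hQ2']
end
end

section
/- Let {ρ_J^{(s)}}_{s∈S} be a family of positive semidefinite operators on a finite-dimensional Hilbert space H_J such that the only projections commuting with all ρ_J^{(s)} are 0 and 1 (irreducibility). If an operator Λ on H_J satisfies Λ ρ_J^{(s)} = β ρ_J^{(s)} Λ for all s ∈ S and some complex number β, and not all ρ_J^{(s)} are zero, then: (a) if β = 1, Λ = c·1 for some complex scalar c; (b) if β ≠ 1 and some ρ_J^{(s)} has nonzero trace, Λ = 0. -/
/-!
If `Λ A = β A Λ` for every member `A` of the family, then `ker Λ` is invariant under the whole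
family, and for Hermitian matrices the orthogonal projection onto an invariant subspace commutes
with the family; irreducibility therefore forces `Λ` to be invertible or zero. For `β = 1` apply
this to `c - Λ` with `c` an eigenvalue of `Λ`. For `β ≠ 1` an invertible `Λ` would conjugate `A`
to `β A`, which is impossible when `tr A ≠ 0`.
-/

open Module.End (invtSubmodule)
open scoped ComplexOrder

theorem Submodule.commute_starProjection_of_mem_invtSubmodule {𝕜 E : Type*} [RCLike 𝕜]
    [NormedAddCommGroup E] [InnerProductSpace 𝕜 E] (K : Submodule 𝕜 E) [K.HasOrthogonalProjection]
    {T : E →L[𝕜] E} (hT : (T : E →ₗ[𝕜] E).IsSymmetric) (hK : K ∈ invtSubmodule (T : E →ₗ[𝕜] E)) :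
    Commute K.starProjection T := by
  have hcomm := LinearMap.IsIdempotentElem.commute_iff
    (ContinuousLinearMap.IsIdempotentElem.toLinearMap K.isIdempotentElem_starProjection) |>.mpr
    ⟨by rwa [K.range_starProjection],
      by rw [K.ker_starProjection]; exact hT.orthogonalComplement_mem_invtSubmodule hK⟩
  exact ContinuousLinearMap.coe_injective hcomm

theorem Module.End.ker_mem_invtSubmodule_of_mul_eq_smul_mul {R M : Type*} [CommSemiring R]
    [AddCommMonoid M] [Module R M] {f g : Module.End R M} {β : R} (h : f * g = β • (g * f)) :
    LinearMap.ker f ∈ invtSubmodule g := by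
  intro x hx
  simp only [Submodule.mem_comap, LinearMap.mem_ker] at hx ⊢
  rw [← Module.End.mul_apply, h, LinearMap.smul_apply, Module.End.mul_apply, hx, map_zero,
    smul_zero]

namespace Matrix

variable {n : Type*} [Fintype n] [DecidableEq n]

theorem eq_one_of_isUnit_of_mul_eq_smul_mul {K : Type*} [Field K] {Λ A : Matrix n n K} {β : K}
    (hΛ : IsUnit Λ) (h : Λ * A = β • (A * Λ)) (hA : A.trace ≠ 0) : β = 1 := by
  have hconj : Λ * A * Λ⁻¹ = β • A := by
    rw [h, smul_mul_assoc, mul_nonsing_inv_cancel_right _ _ ((isUnit_iff_isUnit_det Λ).mp hΛ)]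
  have htr : β * A.trace = 1 * A.trace := by
    rw [← smul_eq_mul, ← trace_smul, ← hconj, trace_conj hΛ, one_mul]
  exact mul_right_cancel₀ hA htr

variable {𝕜 : Type*} [RCLike 𝕜]

theorem toEuclideanLin_mul (A B : Matrix n n 𝕜) :
    toEuclideanLin (A * B) = toEuclideanLin A * toEuclideanLin B := by
  ext x : 1
  simp

theorem isUnit_of_ker_toEuclideanLin_eq_bot {A : Matrix n n 𝕜}
    (h : LinearMap.ker (toEuclideanLin A) = ⊥) : IsUnit A := by
  refine mulVec_injective_iff_isUnit.mp fun v w hvw => ?_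
  apply WithLp.toLp_injective 2
  apply LinearMap.ker_eq_bot.mp h
  simp [hvw]

variable {ι : Type*}

def IsIrreducibleFamily (A : ι → Matrix n n 𝕜) : Prop :=
  ∀ P : Matrix n n 𝕜, P.IsHermitian → P * P = P → (∀ i, P * A i = A i * P) → P = 0 ∨ P = 1

namespace IsIrreducibleFamily

variable {A : ι → Matrix n n 𝕜}

theorem eq_bot_or_eq_top (hirr : IsIrreducibleFamily A) (hA : ∀ i, (A i).IsHermitian)
    {K : Submodule 𝕜 (EuclideanSpace 𝕜 n)} (hK : ∀ i, K ∈ invtSubmodule (toEuclideanLin (A i))) :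
    K = ⊥ ∨ K = ⊤ := by
  let Φ := toEuclideanCLM (𝕜 := 𝕜) (n := n)
  have hP := hirr (Φ.symm K.starProjection) ?herm ?idem ?comm
  · refine hP.imp (fun h => ?_) (fun h => ?_) <;>
      rw [← K.range_starProjection, ← Φ.apply_symm_apply K.starProjection, h] <;>
      simp [Module.End.one_eq_id]
  case herm => exact (isSelfAdjoint_starProjection K).map Φ.symm
  case idem => rw [← _root_.map_mul, K.isIdempotentElem_starProjection.eq]
  case comm =>
    intro i
    apply EquivLike.injective Φ
    rw [_root_.map_mul, _root_.map_mul, Φ.apply_symm_apply]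
    exact K.commute_starProjection_of_mem_invtSubmodule
      (isSymmetric_toEuclideanLin_iff.mpr (hA i)) (hK i)

variable {Λ : Matrix n n 𝕜} {β : 𝕜}

theorem isUnit_or_eq_zero (hirr : IsIrreducibleFamily A) (hA : ∀ i, (A i).IsHermitian)
    (h : ∀ i, Λ * A i = β • (A i * Λ)) : IsUnit Λ ∨ Λ = 0 := by
  have hker : ∀ i, LinearMap.ker (toEuclideanLin Λ) ∈ invtSubmodule (toEuclideanLin (A i)) :=
    fun i => Module.End.ker_mem_invtSubmodule_of_mul_eq_smul_mul <| by
      rw [← toEuclideanLin_mul, ← toEuclideanLin_mul, h, LinearEquiv.map_smul]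
  refine (hirr.eq_bot_or_eq_top hA hker).imp isUnit_of_ker_toEuclideanLin_eq_bot fun htop => ?_
  exact toEuclideanLin.map_eq_zero_iff.mp (LinearMap.ker_eq_top.mp htop)

theorem exists_eq_smul_one [IsAlgClosed 𝕜] (hirr : IsIrreducibleFamily A)
    (hA : ∀ i, (A i).IsHermitian) (h : ∀ i, Commute Λ (A i)) : ∃ c : 𝕜, Λ = c • 1 := by
  cases isEmpty_or_nonempty n
  · exact ⟨0, Subsingleton.elim _ _⟩
  obtain ⟨c, hc⟩ := spectrum.nonempty_of_isAlgClosed_of_finiteDimensional 𝕜 Λ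
  have hcomm : ∀ i, (algebraMap 𝕜 _ c - Λ) * A i = (1 : 𝕜) • (A i * (algebraMap 𝕜 _ c - Λ)) :=
    fun i => by rw [one_smul]; exact ((Algebra.commute_algebraMap_left c (A i)).sub_left (h i)).eq
  refine ⟨c, ?_⟩
  rw [← Algebra.algebraMap_eq_smul_one, eq_comm, ← sub_eq_zero]
  exact (hirr.isUnit_or_eq_zero hA hcomm).resolve_left (spectrum.mem_iff.mp hc)

theorem eq_zero_of_mul_eq_smul_mul (hirr : IsIrreducibleFamily A) (hA : ∀ i, (A i).IsHermitian)
    (h : ∀ i, Λ * A i = β • (A i * Λ)) (hβ : β ≠ 1) (htr : ∃ i, (A i).trace ≠ 0) : Λ = 0 := by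
  obtain ⟨i, hi⟩ := htr
  exact (hirr.isUnit_or_eq_zero hA h).resolve_left fun hΛ =>
    hβ (eq_one_of_isUnit_of_mul_eq_smul_mul hΛ (h i) hi)

end IsIrreducibleFamily

end Matrix

theorem stmt13_general {n : Type*} [Fintype n] [DecidableEq n] {S : Type*}
    (ρJ : S → Matrix n n ℂ) (hpsd : ∀ s, (ρJ s).PosSemidef)
    (hirr : ∀ P : Matrix n n ℂ, P.IsHermitian → P * P = P →
      (∀ s, P * ρJ s = ρJ s * P) → P = 0 ∨ P = 1)
    (Λ : Matrix n n ℂ) (β : ℂ)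
    (hint : ∀ s, Λ * ρJ s = β • (ρJ s * Λ)) :
    (β = 1 → ∃ c : ℂ, Λ = c • (1 : Matrix n n ℂ)) ∧
    (β ≠ 1 → (∃ s, (ρJ s).trace ≠ 0) → Λ = 0) := by
  have hA : ∀ s, (ρJ s).IsHermitian := fun s => (hpsd s).isHermitian
  refine ⟨fun hβ => ?_, Matrix.IsIrreducibleFamily.eq_zero_of_mul_eq_smul_mul hirr hA hint⟩
  subst hβ
  exact Matrix.IsIrreducibleFamily.exists_eq_smul_one hirr hA fun s => by
    rw [Commute, SemiconjBy, hint s, one_smul]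

/-- Lemma 6(ii′), Schur-type lemma: let `{ρ^{(s)}_J}` be an
irreducible family of positive semidefinite operators (only trivial projections
commute with all of them), not all zero. If `Λ ρ^{(s)}_J = β ρ^{(s)}_J Λ` for all
`s`, then (a) for `β = 1`, `Λ` is a scalar multiple of the identity, and
(b) for `β ≠ 1`, if some `ρ^{(s)}_J` has nonzero trace then `Λ = 0`. -/
theorem stmt13 {n : Type*} [Fintype n] [DecidableEq n] {S : Type*}
    (ρJ : S → Matrix n n ℂ) (hpsd : ∀ s, (ρJ s).PosSemidef)
    (hirr : ∀ P : Matrix n n ℂ, P.IsHermitian → P * P = P →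
      (∀ s, P * ρJ s = ρJ s * P) → P = 0 ∨ P = 1)
    (hnz : ∃ s, ρJ s ≠ 0)
    (Λ : Matrix n n ℂ) (β : ℂ)
    (hint : ∀ s, Λ * ρJ s = β • (ρJ s * Λ)) :
    (β = 1 → ∃ c : ℂ, Λ = c • (1 : Matrix n n ℂ)) ∧
    (β ≠ 1 → (∃ s, (ρJ s).trace ≠ 0) → Λ = 0) :=
  stmt13_general ρJ hpsd hirr Λ β hint
end

section
/- No-broadcasting consequence: let {ρ_s}_{s∈S} be density operators on finite-dimensional H_A. If there exists a broadcasting operation (an isometry taking ρ_s ⊗ Σ_B ⊗ Σ_C to a state whose reductions to B and C both equal copies of ρ_s for every s), then the states {ρ_s} pairwise commute, i.e., they are simultaneously diagonalizable. Equivalently, broadcasting is possible only if in the maximal structure every space H^{(l)}_J is one-dimensional. -/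
set_option linter.unusedSectionVars false
set_option linter.unusedVariables false
set_option maxHeartbeats 800000


open Matrix BigOperators
open scoped ComplexOrder

noncomputable section

/-- Marginal on the first (B) factor of a state on `b × (c × e)`. -/
def marginalB {b c e : Type*} [Fintype b] [Fintype c] [Fintype e]
    (M : Matrix (b × c × e) (b × c × e) ℂ) : Matrix b b ℂ :=
  Matrix.of fun i j => ∑ k : c × e, M (i, k) (j, k)

/-- Marginal on the middle (C) factor of a state on `b × (c × e)`. -/
def marginalC {b c e : Type*} [Fintype b] [Fintype c] [Fintype e]
    (M : Matrix (b × c × e) (b × c × e) ℂ) : Matrix c c ℂ :=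
  Matrix.of fun i j => ∑ q : b, ∑ m : e, M (q, i, m) (q, j, m)

section Helpers

variable {n : Type*} [Fintype n] [DecidableEq n]

/-- trace of A * Aᴴ is nonneg. -/
lemma trace_self_mul_conjTranspose_nonneg {m : Type*} [Fintype m]
    (A : Matrix n m ℂ) : 0 ≤ (A * Aᴴ).trace := by
  rw [Matrix.trace]
  apply Finset.sum_nonneg
  intro i _
  rw [Matrix.diag_apply, Matrix.mul_apply]
  apply Finset.sum_nonneg
  intro j _
  simpa [Matrix.conjTranspose_apply, mul_comm] using star_mul_self_nonneg (A i j)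

lemma eq_zero_of_trace_self_mul_conjTranspose {m : Type*} [Fintype m]
    (A : Matrix n m ℂ) (h : (A * Aᴴ).trace = 0) : A = 0 := by
  have h' : ∑ i, ∑ j, star (A i j) * A i j = 0 := by
    rw [← h, Matrix.trace]
    congr 1
    ext i
    rw [Matrix.diag_apply, Matrix.mul_apply]
    congr 1; ext j
    rw [Matrix.conjTranspose_apply]; ring
  ext i j
  have h1 : ∀ i ∈ Finset.univ, (0:ℂ) ≤ ∑ j, star (A i j) * A i j := by
    intro i _
    exact Finset.sum_nonneg fun j _ => star_mul_self_nonneg (A i j)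
  have h2 := (Finset.sum_eq_zero_iff_of_nonneg h1).mp h' i (Finset.mem_univ i)
  have h3 : ∀ j ∈ Finset.univ, (0:ℂ) ≤ star (A i j) * A i j :=
    fun j _ => star_mul_self_nonneg (A i j)
  have h4 := (Finset.sum_eq_zero_iff_of_nonneg h3).mp h2 j (Finset.mem_univ j)
  have h5 : Complex.normSq (A i j) = 0 := by
    have := Complex.normSq_eq_conj_mul_self (z := A i j)
    rw [← Complex.star_def] at this
    exact_mod_cast this.trans h4
  show A i j = 0
  exact Complex.normSq_eq_zero.mp h5

lemma posSemidef_exists_eq_conjTranspose_mul_self' {A : Matrix n n ℂ} (hA : A.PosSemidef) :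
    ∃ B : Matrix n n ℂ, A = Bᴴ * B := by
  open MatrixOrder in
  exact ⟨CFC.sqrt A, by rw [(CFC.sqrt_nonneg A).posSemidef.1.eq, CFC.sqrt_mul_sqrt_self A hA.nonneg]⟩

lemma psd_trace_nonneg {A : Matrix n n ℂ} (hA : A.PosSemidef) : 0 ≤ A.trace := by
  obtain ⟨B, rfl⟩ := posSemidef_exists_eq_conjTranspose_mul_self' hA
  rw [Matrix.trace_mul_comm]
  exact trace_self_mul_conjTranspose_nonneg B

lemma psd_trace_eq_zero {A : Matrix n n ℂ} (hA : A.PosSemidef) (h : A.trace = 0) :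
    A = 0 := by
  obtain ⟨B, rfl⟩ := posSemidef_exists_eq_conjTranspose_mul_self' hA
  rw [Matrix.trace_mul_comm] at h
  rw [eq_zero_of_trace_self_mul_conjTranspose B h]
  simp

/-- trace of product of two PSDs is nonneg. -/
lemma psd_trace_mul_nonneg {A B : Matrix n n ℂ} (hA : A.PosSemidef) (hB : B.PosSemidef) :
    0 ≤ (A * B).trace := by
  obtain ⟨C, rfl⟩ := posSemidef_exists_eq_conjTranspose_mul_self' hA
  obtain ⟨D, rfl⟩ := posSemidef_exists_eq_conjTranspose_mul_self' hB
  have : (Cᴴ * C * (Dᴴ * D)).trace = ((D * Cᴴ) * (D * Cᴴ)ᴴ).trace := by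
    rw [Matrix.conjTranspose_mul, Matrix.conjTranspose_conjTranspose,
      ← Matrix.mul_assoc, Matrix.trace_mul_comm]
    simp [Matrix.mul_assoc]
  rw [this]
  exact trace_self_mul_conjTranspose_nonneg _

lemma psd_sum {κ : Type*} [Fintype κ] (f : κ → Matrix n n ℂ)
    (hf : ∀ k, (f k).PosSemidef) : (∑ k, f k).PosSemidef := by
  classical
  refine Finset.sum_induction f _ (fun a b ha hb => ha.add hb) Matrix.PosSemidef.zero
    (fun k _ => hf k)

/-- if a finite sum of PSD matrices is zero, each is zero -/
lemma psd_sum_eq_zero {κ : Type*} [Fintype κ] {f : κ → Matrix n n ℂ}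
    (hf : ∀ k, (f k).PosSemidef) (h : ∑ k, f k = 0) : ∀ k, f k = 0 := by
  intro k
  have htr : ∑ j, (f j).trace = 0 := by
    rw [← Matrix.trace_sum, h, Matrix.trace_zero]
  have h1 : ∀ j ∈ Finset.univ, (0:ℂ) ≤ (f j).trace := fun j _ => psd_trace_nonneg (hf j)
  have h2 := (Finset.sum_eq_zero_iff_of_nonneg h1).mp htr k (Finset.mem_univ k)
  exact psd_trace_eq_zero (hf k) h2

end Helpers

section Spectral

variable {n : Type*} [Fintype n] [DecidableEq n]

variable {m : Matrix n n ℂ} (hm : m.PosSemidef)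

/-- functional calculus via the spectral decomposition of a PSD matrix -/
def specD (f : ℝ → ℂ) : Matrix n n ℂ :=
  (hm.1.eigenvectorUnitary : Matrix n n ℂ) * Matrix.diagonal (fun i => f (hm.1.eigenvalues i)) *
    (star (hm.1.eigenvectorUnitary : Matrix n n ℂ))

lemma specD_mul (f g : ℝ → ℂ) :
    specD hm f * specD hm g = specD hm (fun x => f x * g x) := by
  have hU : (star (hm.1.eigenvectorUnitary : Matrix n n ℂ)) *
      (hm.1.eigenvectorUnitary : Matrix n n ℂ) = 1 := by
    exact Unitary.coe_star_mul_self _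
  unfold specD
  rw [Matrix.mul_assoc, Matrix.mul_assoc, ← Matrix.mul_assoc (star _) _,
    ← Matrix.mul_assoc (star _) _, hU, Matrix.one_mul, ← Matrix.mul_assoc,
    ← Matrix.mul_assoc]
  congr 1
  rw [Matrix.mul_assoc, Matrix.diagonal_mul_diagonal]

lemma specD_conjTranspose (f : ℝ → ℂ) :
    (specD hm f)ᴴ = specD hm (fun x => star (f x)) := by
  unfold specD
  rw [Matrix.conjTranspose_mul, Matrix.conjTranspose_mul, Matrix.diagonal_conjTranspose]
  simp [Matrix.mul_assoc, Matrix.star_eq_conjTranspose, Pi.star_def]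

lemma specD_congr {f g : ℝ → ℂ} (h : ∀ i, f (hm.1.eigenvalues i) = g (hm.1.eigenvalues i)) :
    specD hm f = specD hm g := by
  unfold specD
  congr 1
  congr 1
  rw [Matrix.diagonal_eq_diagonal_iff]
  exact h

lemma specD_self : specD hm (fun x => (x : ℂ)) = m := by
  have := hm.1.spectral_theorem
  rw [Unitary.conjStarAlgAut_apply] at this
  unfold specD
  exact this.symm

end Spectral

section Kraus

variable {n κ : Type*} [Fintype n] [DecidableEq n] [Fintype κ]

lemma kraus_fix_commute
    (Y : κ → Matrix n n ℂ) (P m s r minv : Matrix n n ℂ)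
    (hPH : Pᴴ = P) (hmH : mᴴ = m) (hrH : rᴴ = r)
    (hsH : sᴴ = s) (hss : s * s = m)
    (hminvH : minvᴴ = minv)
    (hmminv : m * minv = P) (hminvm : minv * m = P)
    (hminvP : minv * P = minv) (hPminv : P * minv = minv)
    (hPr : P * r = r) (hrP : r * P = r)
    (hmPSD : m.PosSemidef)
    (hYP : ∀ k, Y k * P = Y k) (hPY : ∀ k, P * Y k = Y k)
    (hYY : ∑ k, (Y k)ᴴ * Y k = P)
    (hFm : ∑ k, Y k * m * (Y k)ᴴ = m)
    (hFr : ∑ k, Y k * r * (Y k)ᴴ = r) :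
    ∀ k, (r * minv) * Y k = Y k * (r * minv) ∧ (minv * r) * Y k = Y k * (minv * r) := by
  obtain ⟨a, ha⟩ : ∃ a : Matrix n n ℂ, a = r * minv := ⟨_, rfl⟩
  have haH : aᴴ = minv * r := by rw [ha, Matrix.conjTranspose_mul, hrH, hminvH]
  have haP : a * P = a := by rw [ha, Matrix.mul_assoc, hminvP]
  have hPa : P * a = a := by rw [ha, ← Matrix.mul_assoc, hPr]
  have haHP : aᴴ * P = aᴴ := by rw [haH, Matrix.mul_assoc, hrP]
  have hPaH : P * aᴴ = aᴴ := by rw [haH, ← Matrix.mul_assoc, hPminv]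
  have ham : a * m = r := by rw [ha, Matrix.mul_assoc, hminvm, hrP]
  have hmaH : m * aᴴ = r := by rw [haH, ← Matrix.mul_assoc, hmminv, hPr]
  -- trace duality
  have tdual : ∀ X : Matrix n n ℂ,
      (m * ∑ k, (Y k)ᴴ * X * Y k).trace = (m * X).trace := by
    intro X
    rw [Matrix.mul_sum, Matrix.trace_sum]
    have step : ∀ k, (m * ((Y k)ᴴ * X * Y k)).trace = ((Y k * m * (Y k)ᴴ) * X).trace := by
      intro k
      calc (m * ((Y k)ᴴ * X * Y k)).trace
          = ((m * (Y k)ᴴ * X) * Y k).trace := by simp only [← Matrix.mul_assoc]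
        _ = (Y k * (m * (Y k)ᴴ * X)).trace := by rw [Matrix.trace_mul_comm]
        _ = ((Y k * m * (Y k)ᴴ) * X).trace := by simp only [← Matrix.mul_assoc]
    rw [Finset.sum_congr rfl fun k _ => step k, ← Matrix.trace_sum, ← Matrix.sum_mul, hFm]
  -- killing lemma
  have kill : ∀ G : Matrix n n ℂ, G * P = G → (m * (Gᴴ * G)).trace = 0 → G = 0 := by
    intro G hGP hG
    have h1 : (m * (Gᴴ * G)).trace = ((G * s) * (G * s)ᴴ).trace := by
      calc (m * (Gᴴ * G)).trace = ((m * Gᴴ) * G).trace := by rw [Matrix.mul_assoc]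
        _ = (G * (m * Gᴴ)).trace := by rw [Matrix.trace_mul_comm]
        _ = ((G * s) * (G * s)ᴴ).trace := by
            rw [Matrix.conjTranspose_mul, hsH, ← hss]
            simp only [Matrix.mul_assoc]
    have h2 : G * s = 0 := eq_zero_of_trace_self_mul_conjTranspose _ (by rw [← h1, hG])
    have h3 : G * m = 0 := by rw [← hss, ← Matrix.mul_assoc, h2, Matrix.zero_mul]
    have h4 : G * P = 0 := by rw [← hmminv, ← Matrix.mul_assoc, h3, Matrix.zero_mul]
    rw [← hGP, h4]
  -- nonneg of weighted traces
  have wnn : ∀ G : Matrix n n ℂ, 0 ≤ (m * (Gᴴ * G)).trace := fun G =>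
    psd_trace_mul_nonneg hmPSD (Matrix.posSemidef_conjTranspose_mul_self G)
  -- the averaged operator
  obtain ⟨B, hB⟩ : ∃ B : Matrix n n ℂ, B = ∑ k, (Y k)ᴴ * a * Y k := ⟨_, rfl⟩
  have hBH : Bᴴ = ∑ k, (Y k)ᴴ * aᴴ * Y k := by
    rw [hB, Matrix.conjTranspose_sum]
    refine Finset.sum_congr rfl fun k _ => ?_
    rw [Matrix.conjTranspose_mul, Matrix.conjTranspose_mul,
      Matrix.conjTranspose_conjTranspose, Matrix.mul_assoc]
  have hBP : B * P = B := by
    rw [hB, Matrix.sum_mul]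
    refine Finset.sum_congr rfl fun k _ => ?_
    rw [Matrix.mul_assoc, hYP]
  have hPB : P * B = B := by
    have hPYH : ∀ k, P * (Y k)ᴴ = (Y k)ᴴ := by
      intro k; rw [← hPH, ← Matrix.conjTranspose_mul, hYP]
    rw [hB, Matrix.mul_sum]
    refine Finset.sum_congr rfl fun k _ => ?_
    rw [← Matrix.mul_assoc, ← Matrix.mul_assoc, hPYH]
  -- trace identities
  have td1 : (m * (aᴴ * B)).trace = (r * a).trace := by
    rw [hB, Matrix.mul_sum, Matrix.mul_sum, Matrix.trace_sum]
    have step : ∀ k, (m * (aᴴ * ((Y k)ᴴ * a * Y k))).trace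
        = ((Y k * r * (Y k)ᴴ) * a).trace := by
      intro k
      calc (m * (aᴴ * ((Y k)ᴴ * a * Y k))).trace
          = ((m * aᴴ * (Y k)ᴴ * a) * Y k).trace := by simp only [← Matrix.mul_assoc]
        _ = (Y k * (m * aᴴ * (Y k)ᴴ * a)).trace := by rw [Matrix.trace_mul_comm]
        _ = ((Y k * r * (Y k)ᴴ) * a).trace := by rw [hmaH]; simp only [← Matrix.mul_assoc]
    rw [Finset.sum_congr rfl fun k _ => step k, ← Matrix.trace_sum, ← Matrix.sum_mul, hFr]
  have star_ra : star ((r * a).trace) = (r * a).trace := by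
    rw [← Matrix.trace_conjTranspose]
    have e : (r * a)ᴴ = minv * (r * r) := by
      rw [ha, Matrix.conjTranspose_mul, Matrix.conjTranspose_mul, hrH, hminvH,
        Matrix.mul_assoc]
    rw [e, Matrix.trace_mul_comm, ha, Matrix.mul_assoc]
  have td2 : (m * (Bᴴ * a)).trace = (r * a).trace := by
    have e1 : (m * (aᴴ * B))ᴴ = Bᴴ * (a * m) := by
      rw [Matrix.conjTranspose_mul, Matrix.conjTranspose_mul, hmH,
        Matrix.conjTranspose_conjTranspose, Matrix.mul_assoc]
    have e2 : (m * (Bᴴ * a)).trace = ((m * (aᴴ * B))ᴴ).trace := by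
      rw [e1, Matrix.trace_mul_comm, Matrix.mul_assoc]
    rw [e2, Matrix.trace_conjTranspose, td1, star_ra]
  have htaa : (m * (aᴴ * a)).trace = (r * a).trace := by
    rw [← Matrix.mul_assoc, hmaH]
  -- Kadison-Schwarz step
  have E1 : ∑ k, (a * Y k - Y k * B)ᴴ * (a * Y k - Y k * B)
      = (∑ k, (Y k)ᴴ * (aᴴ * a) * Y k) - Bᴴ * B := by
    have expand : ∀ k, (a * Y k - Y k * B)ᴴ * (a * Y k - Y k * B)
        = (Y k)ᴴ * (aᴴ * a) * Y k - ((Y k)ᴴ * aᴴ * Y k) * B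
          - Bᴴ * ((Y k)ᴴ * a * Y k) + Bᴴ * ((Y k)ᴴ * Y k) * B := by
      intro k
      rw [Matrix.conjTranspose_sub, Matrix.conjTranspose_mul, Matrix.conjTranspose_mul]
      noncomm_ring
    rw [Finset.sum_congr rfl fun k _ => expand k]
    rw [Finset.sum_add_distrib, Finset.sum_sub_distrib, Finset.sum_sub_distrib,
      ← Finset.sum_mul, ← Finset.mul_sum, ← hBH, ← hB]
    have e3 : (∑ k, Bᴴ * ((Y k)ᴴ * Y k) * B) = Bᴴ * B := by
      have step : ∀ k, Bᴴ * ((Y k)ᴴ * Y k) * B = Bᴴ * (((Y k)ᴴ * Y k) * B) := by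
        intro k; rw [Matrix.mul_assoc]
      rw [Finset.sum_congr rfl fun k _ => step k, ← Finset.mul_sum, ← Finset.sum_mul, hYY,
        hPB]
    rw [e3]
    abel
  have hF1psd : (0:ℂ) ≤ (m * ((∑ k, (Y k)ᴴ * (aᴴ * a) * Y k) - Bᴴ * B)).trace := by
    rw [← E1]
    exact psd_trace_mul_nonneg hmPSD
      (psd_sum _ fun k => Matrix.posSemidef_conjTranspose_mul_self _)
  have hle : (m * (Bᴴ * B)).trace ≤ (r * a).trace := by
    rw [Matrix.mul_sub, Matrix.trace_sub, tdual (aᴴ * a), htaa] at hF1psd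
    exact sub_nonneg.mp hF1psd
  -- B = a
  have hBa : B = a := by
    have expand2 : (B - a)ᴴ * (B - a) = Bᴴ * B - Bᴴ * a - aᴴ * B + aᴴ * a := by
      rw [Matrix.conjTranspose_sub]; noncomm_ring
    have hT : (m * ((B - a)ᴴ * (B - a))).trace = (m * (Bᴴ * B)).trace - (r * a).trace := by
      rw [expand2]
      simp only [Matrix.mul_sub, Matrix.mul_add, Matrix.trace_sub, Matrix.trace_add]
      rw [td1, td2, htaa]
      ring
    have hT0 : (m * ((B - a)ᴴ * (B - a))).trace = 0 := by
      have h1 := wnn (B - a)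
      have h2 : (m * ((B - a)ᴴ * (B - a))).trace ≤ 0 := by
        rw [hT]; exact sub_nonpos.mpr hle
      exact le_antisymm h2 h1
    exact sub_eq_zero.mp (kill (B - a) (by rw [Matrix.sub_mul, hBP, haP]) hT0)
  have hBa' : ∑ k, (Y k)ᴴ * a * Y k = a := by rw [← hB, hBa]
  have hBHa : ∑ k, (Y k)ᴴ * aᴴ * Y k = aᴴ := by rw [← hBH, hBa]
  -- main commutation
  have main : ∀ (x : Matrix n n ℂ), x * P = x → P * x = x →
      (∑ k, (Y k)ᴴ * x * Y k = x) → (∑ k, (Y k)ᴴ * xᴴ * Y k = xᴴ) →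
      ∀ k, x * Y k = Y k * x := by
    intro x hxP hPx hfix hfixH
    have E2 : ∑ k, (x * Y k - Y k * x)ᴴ * (x * Y k - Y k * x)
        = (∑ k, (Y k)ᴴ * (xᴴ * x) * Y k) - xᴴ * x := by
      have expand : ∀ k, (x * Y k - Y k * x)ᴴ * (x * Y k - Y k * x)
          = (Y k)ᴴ * (xᴴ * x) * Y k - ((Y k)ᴴ * xᴴ * Y k) * x
            - xᴴ * ((Y k)ᴴ * x * Y k) + xᴴ * ((Y k)ᴴ * Y k) * x := by
        intro k
        rw [Matrix.conjTranspose_sub, Matrix.conjTranspose_mul, Matrix.conjTranspose_mul]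
        noncomm_ring
      rw [Finset.sum_congr rfl fun k _ => expand k]
      rw [Finset.sum_add_distrib, Finset.sum_sub_distrib, Finset.sum_sub_distrib,
        ← Finset.sum_mul, ← Finset.mul_sum, hfix, hfixH]
      have e3 : (∑ k, xᴴ * ((Y k)ᴴ * Y k) * x) = xᴴ * x := by
        have step : ∀ k, xᴴ * ((Y k)ᴴ * Y k) * x = xᴴ * (((Y k)ᴴ * Y k) * x) := by
          intro k; rw [Matrix.mul_assoc]
        rw [Finset.sum_congr rfl fun k _ => step k, ← Finset.mul_sum, ← Finset.sum_mul, hYY,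
          hPx]
      rw [e3]
      abel
    have hzero : (m * ∑ k, (x * Y k - Y k * x)ᴴ * (x * Y k - Y k * x)).trace = 0 := by
      rw [E2, Matrix.mul_sub, Matrix.trace_sub, tdual (xᴴ * x), sub_self]
    have heach : ∀ k, (m * ((x * Y k - Y k * x)ᴴ * (x * Y k - Y k * x))).trace = 0 := by
      have hsplit : ∑ k, (m * ((x * Y k - Y k * x)ᴴ * (x * Y k - Y k * x))).trace = 0 := by
        rw [← Matrix.trace_sum, ← Matrix.mul_sum, hzero]
      intro k
      have h1 : ∀ j ∈ Finset.univ, (0:ℂ) ≤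
          (m * ((x * Y j - Y j * x)ᴴ * (x * Y j - Y j * x))).trace :=
        fun j _ => wnn _
      exact (Finset.sum_eq_zero_iff_of_nonneg h1).mp hsplit k (Finset.mem_univ k)
    intro k
    refine sub_eq_zero.mp (kill (x * Y k - Y k * x) ?_ (heach k))
    rw [Matrix.sub_mul, Matrix.mul_assoc, hYP, Matrix.mul_assoc, hxP]
  intro k
  constructor
  · have h := main a haP hPa hBa' hBHa k
    rwa [ha] at h
  · have hBack : ∑ j, (Y j)ᴴ * aᴴᴴ * Y j = aᴴᴴ := by
      rw [Matrix.conjTranspose_conjTranspose]; exact hBa'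
    have h := main aᴴ haHP hPaH hBHa hBack k
    rwa [haH] at h

end Kraus
section Slices

variable {b c e n : Type*} [Fintype b] [Fintype c] [Fintype e] [Fintype n]

def sliceB (V : Matrix (b × c × e) n ℂ) (k : c × e) : Matrix b n ℂ :=
  Matrix.of fun q α => V (q, k.1, k.2) α

def sliceC (V : Matrix (b × c × e) n ℂ) (l : b × e) : Matrix c n ℂ :=
  Matrix.of fun j α => V (l.1, j, l.2) α

lemma sliceB_mul_apply (V : Matrix (b × c × e) n ℂ) (k : c × e) (N : Matrix n n ℂ)
    (q : b) (β : n) : (sliceB V k * N) q β = (V * N) (q, k.1, k.2) β := by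
  simp [sliceB, Matrix.mul_apply]

lemma sliceC_mul_apply (V : Matrix (b × c × e) n ℂ) (l : b × e) (N : Matrix n n ℂ)
    (j : c) (β : n) : (sliceC V l * N) j β = (V * N) (l.1, j, l.2) β := by
  simp [sliceC, Matrix.mul_apply]

lemma sumB (V : Matrix (b × c × e) n ℂ) (X : Matrix n n ℂ) :
    marginalB (V * X * Vᴴ) = ∑ k : c × e, sliceB V k * X * (sliceB V k)ᴴ := by
  ext i j
  rw [marginalB]
  simp only [Matrix.of_apply, Matrix.sum_apply]
  refine Finset.sum_congr rfl fun k _ => ?_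
  rw [Matrix.mul_apply, Matrix.mul_apply]
  refine Finset.sum_congr rfl fun β _ => ?_
  rw [Matrix.conjTranspose_apply, Matrix.conjTranspose_apply, sliceB_mul_apply]
  rfl

lemma sumC (V : Matrix (b × c × e) n ℂ) (X : Matrix n n ℂ) :
    marginalC (V * X * Vᴴ) = ∑ l : b × e, sliceC V l * X * (sliceC V l)ᴴ := by
  ext i j
  rw [marginalC]
  simp only [Matrix.of_apply, Matrix.sum_apply]
  rw [Fintype.sum_prod_type]
  refine Finset.sum_congr rfl fun q _ => ?_
  refine Finset.sum_congr rfl fun me _ => ?_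
  rw [Matrix.mul_apply, Matrix.mul_apply]
  refine Finset.sum_congr rfl fun β _ => ?_
  rw [Matrix.conjTranspose_apply, Matrix.conjTranspose_apply, sliceC_mul_apply]
  rfl

lemma sum_prod_ce (f : b × c × e → ℂ) :
    ∑ x : b × c × e, f x = ∑ k : c × e, ∑ q : b, f (q, k.1, k.2) := by
  rw [Fintype.sum_prod_type]
  exact Finset.sum_comm

lemma sum_prod_be (f : b × c × e → ℂ) :
    ∑ x : b × c × e, f x = ∑ l : b × e, ∑ j : c, f (l.1, j, l.2) := by
  calc ∑ x : b × c × e, f x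
      = ∑ q : b, ∑ y : c × e, f (q, y) := Fintype.sum_prod_type f
    _ = ∑ q : b, ∑ j : c, ∑ me : e, f (q, j, me) :=
        Finset.sum_congr rfl fun q _ => Fintype.sum_prod_type _
    _ = ∑ q : b, ∑ me : e, ∑ j : c, f (q, j, me) :=
        Finset.sum_congr rfl fun q _ => Finset.sum_comm
    _ = ∑ l : b × e, ∑ j : c, f (l.1, j, l.2) := by
        rw [Fintype.sum_prod_type]

lemma sliceB_sq (V : Matrix (b × c × e) n ℂ) :
    ∑ k : c × e, (sliceB V k)ᴴ * sliceB V k = Vᴴ * V := by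
  ext α β
  simp only [Matrix.sum_apply, Matrix.mul_apply, Matrix.conjTranspose_apply, sliceB,
    Matrix.of_apply]
  exact (sum_prod_ce fun x => star (V x α) * V x β).symm

lemma sliceC_sq (V : Matrix (b × c × e) n ℂ) :
    ∑ l : b × e, (sliceC V l)ᴴ * sliceC V l = Vᴴ * V := by
  ext α β
  simp only [Matrix.sum_apply, Matrix.mul_apply, Matrix.conjTranspose_apply, sliceC,
    Matrix.of_apply]
  exact (sum_prod_be fun x => star (V x α) * V x β).symm

end Slices

section RangeHelper

variable {d n κ : Type*} [Fintype d] [DecidableEq d] [Fintype n] [DecidableEq n] [Fintype κ]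

lemma range_helper
    (T : κ → Matrix d n ℂ) (G : Matrix d d ℂ) (m sq : Matrix n n ℂ)
    (hsH : sqᴴ = sq) (hss : sq * sq = m) (hGH : Gᴴ = G)
    (hsum : G * (∑ k, T k * m * (T k)ᴴ) * G = 0) :
    ∀ k, G * T k * sq = 0 := by
  have hterm : ∀ k, (G * T k * sq) * (G * T k * sq)ᴴ = G * (T k * m * (T k)ᴴ) * G := by
    intro k
    rw [Matrix.conjTranspose_mul, Matrix.conjTranspose_mul, hsH, hGH]
    simp only [Matrix.mul_assoc]
    rw [← Matrix.mul_assoc sq sq, hss]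
  have hsum0 : ∑ k, (G * T k * sq) * (G * T k * sq)ᴴ = 0 := by
    rw [Finset.sum_congr rfl fun k _ => hterm k]
    have e : ∀ k, G * (T k * m * (T k)ᴴ) * G = G * ((T k * m * (T k)ᴴ) * G) :=
      fun k => Matrix.mul_assoc _ _ _
    rw [Finset.sum_congr rfl fun k _ => e k, ← Finset.mul_sum, ← Finset.sum_mul,
      ← Matrix.mul_assoc, hsum]
  intro k
  exact Matrix.self_mul_conjTranspose_eq_zero.mp
    (psd_sum_eq_zero (fun j => Matrix.posSemidef_self_mul_conjTranspose _) hsum0 k)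

end RangeHelper

section Side

variable {n d κ : Type*} [Fintype n] [DecidableEq n] [Fintype d] [DecidableEq d] [Fintype κ]

lemma side_commute
    (A : κ → Matrix d n ℂ) (W : Matrix d n ℂ) (hW : Wᴴ * W = 1)
    (hAA : ∑ k, (A k)ᴴ * A k = 1)
    (Pm m sq r minv : Matrix n n ℂ)
    (hPH : Pmᴴ = Pm) (hmH : mᴴ = m) (hrH : rᴴ = r) (hsH : sqᴴ = sq) (hss : sq * sq = m)
    (hminvH : minvᴴ = minv) (hmminv : m * minv = Pm) (hminvm : minv * m = Pm)
    (hminvP : minv * Pm = minv) (hPminv : Pm * minv = minv)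
    (hPr : Pm * r = r) (hrP : r * Pm = r)
    (hPP : Pm * Pm = Pm) (hPm : Pm * m = m) (hmP : m * Pm = m)
    (hmPSD : m.PosSemidef)
    (hsum_m : ∑ k, A k * m * (A k)ᴴ = W * m * Wᴴ)
    (hsum_r : ∑ k, A k * r * (A k)ᴴ = W * r * Wᴴ) :
    ∀ k, (A k * Pm) * (r * minv) = (W * (r * minv) * Wᴴ) * (A k * Pm)
      ∧ (A k * Pm) * (minv * r) = (W * (minv * r) * Wᴴ) * (A k * Pm) := by
  have hQH : (W * Wᴴ)ᴴ = W * Wᴴ := by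
    rw [Matrix.conjTranspose_mul, Matrix.conjTranspose_conjTranspose]
  have hQW : (W * Wᴴ) * W = W := by rw [Matrix.mul_assoc, hW, Matrix.mul_one]
  have hQcW : (1 - W * Wᴴ) * W = 0 := by rw [Matrix.sub_mul, Matrix.one_mul, hQW, sub_self]
  have hQcH : (1 - W * Wᴴ)ᴴ = 1 - W * Wᴴ := by
    rw [Matrix.conjTranspose_sub, Matrix.conjTranspose_one, hQH]
  -- range argument for A
  have range1 : ∀ k, (1 - W * Wᴴ) * A k * sq = 0 := by
    apply range_helper A (1 - W * Wᴴ) m sq hsH hss hQcH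
    rw [hsum_m]
    simp only [← Matrix.mul_assoc]
    rw [hQcW]
    simp
  have hQA : ∀ k, (W * Wᴴ) * (A k * Pm) = A k * Pm := by
    intro k
    have h1 : (1 - W * Wᴴ) * (A k * Pm) = 0 := by
      have e : (1 - W * Wᴴ) * (A k * Pm) = ((1 - W * Wᴴ) * A k * sq) * (sq * minv) := by
        rw [← hmminv, ← hss]
        simp only [Matrix.mul_assoc]
      rw [e, range1 k, Matrix.zero_mul]
    rw [Matrix.sub_mul, Matrix.one_mul] at h1
    exact (sub_eq_zero.mp h1).symm
  -- the Kraus family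
  set Y : κ → Matrix n n ℂ := fun k => Wᴴ * A k * Pm with hYdef
  have hYH : ∀ k, (Y k)ᴴ = Pm * ((A k)ᴴ * W) := by
    intro k
    simp only [hYdef]
    rw [Matrix.conjTranspose_mul, Matrix.conjTranspose_mul, hPH,
      Matrix.conjTranspose_conjTranspose]
  have hYP : ∀ k, Y k * Pm = Y k := by
    intro k
    simp only [hYdef]
    rw [Matrix.mul_assoc (Wᴴ * A k), hPP]
  have hfix : ∀ X : Matrix n n ℂ, Pm * X = X → X * Pm = X →
      (∑ k, A k * X * (A k)ᴴ = W * X * Wᴴ) → ∑ k, Y k * X * (Y k)ᴴ = X := by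
    intro X h1 h2 h3
    have hterm : ∀ k, Y k * X * (Y k)ᴴ = Wᴴ * (A k * X * (A k)ᴴ) * W := by
      intro k
      rw [hYH k]
      simp only [hYdef]
      simp only [Matrix.mul_assoc]
      rw [← Matrix.mul_assoc X Pm, h2, ← Matrix.mul_assoc Pm X, h1]
    rw [Finset.sum_congr rfl fun k _ => hterm k]
    have e : ∀ k, Wᴴ * (A k * X * (A k)ᴴ) * W = Wᴴ * ((A k * X * (A k)ᴴ) * W) :=
      fun k => Matrix.mul_assoc _ _ _
    rw [Finset.sum_congr rfl fun k _ => e k, ← Matrix.mul_sum, ← Matrix.sum_mul, h3]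
    simp only [Matrix.mul_assoc]
    rw [hW, Matrix.mul_one, ← Matrix.mul_assoc, hW, Matrix.one_mul]
  have hFm : ∑ k, Y k * m * (Y k)ᴴ = m := hfix m hPm hmP hsum_m
  have hFr : ∑ k, Y k * r * (Y k)ᴴ = r := hfix r hPr hrP hsum_r
  have hPY : ∀ k, Pm * Y k = Y k := by
    have hPcH : (1 - Pm)ᴴ = 1 - Pm := by
      rw [Matrix.conjTranspose_sub, Matrix.conjTranspose_one, hPH]
    have range2 : ∀ k, (1 - Pm) * Y k * sq = 0 := by
      apply range_helper Y (1 - Pm) m sq hsH hss hPcH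
      rw [hFm, Matrix.sub_mul, Matrix.one_mul, hPm, sub_self, Matrix.zero_mul]
    intro k
    have h1 : (1 - Pm) * Y k = 0 := by
      have e : ((1 - Pm) * Y k * sq) * (sq * minv) = (1 - Pm) * Y k := by
        simp only [Matrix.mul_assoc]
        rw [← Matrix.mul_assoc sq sq, hss, hmminv, hYP k]
      rw [← e, range2 k, Matrix.zero_mul]
    rw [Matrix.sub_mul, Matrix.one_mul] at h1
    exact (sub_eq_zero.mp h1).symm
  have hYY : ∑ k, (Y k)ᴴ * Y k = Pm := by
    have hterm : ∀ k, (Y k)ᴴ * Y k = Pm * ((A k)ᴴ * A k) * Pm := by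
      intro k
      rw [hYH k]
      simp only [hYdef]
      simp only [Matrix.mul_assoc]
      rw [← Matrix.mul_assoc W Wᴴ, hQA k]
    rw [Finset.sum_congr rfl fun k _ => hterm k]
    have e : ∀ k, Pm * ((A k)ᴴ * A k) * Pm = Pm * (((A k)ᴴ * A k) * Pm) :=
      fun k => Matrix.mul_assoc _ _ _
    rw [Finset.sum_congr rfl fun k _ => e k, ← Finset.mul_sum, ← Finset.sum_mul, hAA,
      Matrix.one_mul, hPP]
  have khc := kraus_fix_commute Y Pm m sq r minv hPH hmH hrH hsH hss hminvH hmminv hminvm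
    hminvP hPminv hPr hrP hmPSD hYP hPY hYY hFm hFr
  have hWY : ∀ k, W * Y k = A k * Pm := by
    intro k
    simp only [hYdef]
    rw [← Matrix.mul_assoc, ← Matrix.mul_assoc, Matrix.mul_assoc (W * Wᴴ), hQA k]
  intro k
  constructor
  · have h := (khc k).1
    calc (A k * Pm) * (r * minv) = (W * Y k) * (r * minv) := by rw [hWY k]
      _ = W * ((r * minv) * Y k) := by rw [Matrix.mul_assoc, ← h]
      _ = (W * (r * minv) * Wᴴ) * (A k * Pm) := by
          rw [← hWY k]
          simp only [Matrix.mul_assoc]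
          rw [← Matrix.mul_assoc Wᴴ W, hW, Matrix.one_mul]
  · have h := (khc k).2
    calc (A k * Pm) * (minv * r) = (W * Y k) * (minv * r) := by rw [hWY k]
      _ = W * ((minv * r) * Y k) := by rw [Matrix.mul_assoc, ← h]
      _ = (W * (minv * r) * Wᴴ) * (A k * Pm) := by
          rw [← hWY k]
          simp only [Matrix.mul_assoc]
          rw [← Matrix.mul_assoc Wᴴ W, hW, Matrix.one_mul]

end Side
section Swap

variable {b c e n : Type*} [Fintype b] [Fintype c] [Fintype e] [Fintype n]

lemma entryB (V : Matrix (b × c × e) n ℂ) (N x : Matrix n n ℂ) (G : Matrix b b ℂ)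
    (h : ∀ k : c × e, (sliceB V k * N) * x = G * (sliceB V k * N)) :
    ∀ (p : b × c × e) (β : n),
      ((V * N) * x) p β = ∑ q' : b, G p.1 q' * (V * N) (q', p.2.1, p.2.2) β := by
  intro p β
  obtain ⟨q, j, me⟩ := p
  have h1 : ((sliceB V (j, me) * N) * x) q β = ((V * N) * x) (q, j, me) β := by
    simp only [Matrix.mul_assoc]
    exact sliceB_mul_apply V (j, me) (N * x) q β
  have h2 : (G * (sliceB V (j, me) * N)) q β = ∑ q' : b, G q q' * (V * N) (q', j, me) β := by
    rw [Matrix.mul_apply]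
    refine Finset.sum_congr rfl fun q' _ => ?_
    rw [sliceB_mul_apply]
  rw [← h1, h (j, me), h2]

lemma entryC (V : Matrix (b × c × e) n ℂ) (N x : Matrix n n ℂ) (G : Matrix c c ℂ)
    (h : ∀ l : b × e, (sliceC V l * N) * x = G * (sliceC V l * N)) :
    ∀ (p : b × c × e) (β : n),
      ((V * N) * x) p β = ∑ j' : c, G p.2.1 j' * (V * N) (p.1, j', p.2.2) β := by
  intro p β
  obtain ⟨q, j, me⟩ := p
  have h1 : ((sliceC V (q, me) * N) * x) j β = ((V * N) * x) (q, j, me) β := by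
    simp only [Matrix.mul_assoc]
    exact sliceC_mul_apply V (q, me) (N * x) j β
  have h2 : (G * (sliceC V (q, me) * N)) j β = ∑ j' : c, G j j' * (V * N) (q, j', me) β := by
    rw [Matrix.mul_apply]
    refine Finset.sum_congr rfl fun j' _ => ?_
    rw [sliceC_mul_apply]
  rw [← h1, h (q, me), h2]

lemma swap_comm (V : Matrix (b × c × e) n ℂ) (N a1 a2 : Matrix n n ℂ)
    (G1 : Matrix b b ℂ) (G2 : Matrix c c ℂ)
    (h1 : ∀ (p : b × c × e) (β : n),
      ((V * N) * a1) p β = ∑ q' : b, G1 p.1 q' * (V * N) (q', p.2.1, p.2.2) β)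
    (h2 : ∀ (p : b × c × e) (β : n),
      ((V * N) * a2) p β = ∑ j' : c, G2 p.2.1 j' * (V * N) (p.1, j', p.2.2) β) :
    (V * N) * (a1 * a2) = (V * N) * (a2 * a1) := by
  ext p β
  obtain ⟨q, j, me⟩ := p
  have L : ((V * N) * (a1 * a2)) (q, j, me) β
      = ∑ q' : b, G1 q q' * ∑ j' : c, G2 j j' * (V * N) (q', j', me) β := by
    rw [← Matrix.mul_assoc, Matrix.mul_apply]
    have e1 : ∀ γ, ((V * N) * a1) (q, j, me) γ * a2 γ β
        = ∑ q' : b, G1 q q' * ((V * N) (q', j, me) γ * a2 γ β) := by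
      intro γ
      rw [h1 (q, j, me) γ, Finset.sum_mul]
      exact Finset.sum_congr rfl fun q' _ => mul_assoc _ _ _
    rw [Finset.sum_congr rfl fun γ _ => e1 γ, Finset.sum_comm]
    refine Finset.sum_congr rfl fun q' _ => ?_
    rw [← Finset.mul_sum]
    congr 1
    rw [← Matrix.mul_apply, h2 (q', j, me) β]
  have R : ((V * N) * (a2 * a1)) (q, j, me) β
      = ∑ j' : c, G2 j j' * ∑ q' : b, G1 q q' * (V * N) (q', j', me) β := by
    rw [← Matrix.mul_assoc, Matrix.mul_apply]
    have e1 : ∀ γ, ((V * N) * a2) (q, j, me) γ * a1 γ β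
        = ∑ j' : c, G2 j j' * ((V * N) (q, j', me) γ * a1 γ β) := by
      intro γ
      rw [h2 (q, j, me) γ, Finset.sum_mul]
      exact Finset.sum_congr rfl fun j' _ => mul_assoc _ _ _
    rw [Finset.sum_congr rfl fun γ _ => e1 γ, Finset.sum_comm]
    refine Finset.sum_congr rfl fun j' _ => ?_
    rw [← Finset.mul_sum]
    congr 1
    rw [← Matrix.mul_apply, h1 (q, j', me) β]
  show ((V * N) * (a1 * a2)) (q, j, me) β = ((V * N) * (a2 * a1)) (q, j, me) β
  rw [L, R]
  simp only [Finset.mul_sum]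
  rw [Finset.sum_comm]
  exact Finset.sum_congr rfl fun j' _ => Finset.sum_congr rfl fun q' _ => by ring

end Swap

/-- no-broadcasting: if a single physical operation — a Stinespring
isometry `V` from `H_A` into `H_B' ⊗ H_C' ⊗ E` — broadcasts every `ρ_s`, i.e. its
B-marginal is `W_B ρ_s W_Bᴴ` and its C-marginal is `W_C ρ_s W_Cᴴ` for all `s`
(with fixed isometric embeddings `W_B, W_C` of `H_A` into B and C), then the
states `{ρ_s}` pairwise commute (are simultaneously diagonalizable). -/
theorem stmt18 {n b c e : Type*} [Fintype n] [DecidableEq n]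
    [Fintype b] [DecidableEq b] [Fintype c] [DecidableEq c]
    [Fintype e] [DecidableEq e] {S : Type*}
    (ρ : S → Matrix n n ℂ)
    (hdens : ∀ s, (ρ s).PosSemidef ∧ (ρ s).trace = 1)
    (WB : Matrix b n ℂ) (hWB : WBᴴ * WB = 1)
    (WC : Matrix c n ℂ) (hWC : WCᴴ * WC = 1)
    (V : Matrix (b × c × e) n ℂ) (hiso : Vᴴ * V = 1)
    (hbroadB : ∀ s, marginalB (V * ρ s * Vᴴ) = WB * ρ s * WBᴴ)
    (hbroadC : ∀ s, marginalC (V * ρ s * Vᴴ) = WC * ρ s * WCᴴ) :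
    ∀ s t, ρ s * ρ t = ρ t * ρ s := by
  intro s t
  obtain ⟨hρ1, -⟩ := hdens s
  obtain ⟨hρ2, -⟩ := hdens t
  have hm : (ρ s + ρ t).PosSemidef := hρ1.add hρ2
  have hev : ∀ i, 0 ≤ hm.1.eigenvalues i := hm.eigenvalues_nonneg
  -- spectral pack
  obtain ⟨Pm, hPmdef⟩ :
      ∃ P : Matrix n n ℂ, P = specD hm (fun x => if x = 0 then 0 else 1) := ⟨_, rfl⟩
  obtain ⟨minv, hminvdef⟩ :
      ∃ Mi : Matrix n n ℂ, Mi = specD hm (fun x => if x = 0 then 0 else (x : ℂ)⁻¹) := ⟨_, rfl⟩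
  obtain ⟨sq, hsqdef⟩ :
      ∃ Sq : Matrix n n ℂ, Sq = specD hm (fun x => ((Real.sqrt x : ℝ) : ℂ)) := ⟨_, rfl⟩
  have hmD : specD hm (fun x => (x : ℂ)) = ρ s + ρ t := specD_self hm
  have hPH : Pmᴴ = Pm := by
    rw [hPmdef, specD_conjTranspose]
    exact specD_congr hm fun i => by
      by_cases h : hm.1.eigenvalues i = 0 <;> simp [h]
  have hminvH : minvᴴ = minv := by
    rw [hminvdef, specD_conjTranspose]
    exact specD_congr hm fun i => by
      by_cases h : hm.1.eigenvalues i = 0 <;>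
        simp [h, ← Complex.ofReal_inv]
  have hsH : sqᴴ = sq := by
    rw [hsqdef, specD_conjTranspose]
    exact specD_congr hm fun i => by simp
  have hPP : Pm * Pm = Pm := by
    rw [hPmdef, specD_mul]
    exact specD_congr hm fun i => by
      by_cases h : hm.1.eigenvalues i = 0 <;> simp [h]
  have hmminv : (ρ s + ρ t) * minv = Pm := by
    rw [← hmD, hminvdef, specD_mul, hPmdef]
    exact specD_congr hm fun i => by
      by_cases h : hm.1.eigenvalues i = 0
      · simp [h]
      · simp [h, mul_inv_cancel₀ (Complex.ofReal_ne_zero.mpr h)]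
  have hminvm : minv * (ρ s + ρ t) = Pm := by
    rw [← hmD, hminvdef, specD_mul, hPmdef]
    exact specD_congr hm fun i => by
      by_cases h : hm.1.eigenvalues i = 0
      · simp [h]
      · simp [h, inv_mul_cancel₀ (Complex.ofReal_ne_zero.mpr h)]
  have hminvP : minv * Pm = minv := by
    rw [hminvdef, hPmdef, specD_mul]
    exact specD_congr hm fun i => by
      by_cases h : hm.1.eigenvalues i = 0 <;> simp [h]
  have hPminv : Pm * minv = minv := by
    rw [hminvdef, hPmdef, specD_mul]
    exact specD_congr hm fun i => by
      by_cases h : hm.1.eigenvalues i = 0 <;> simp [h]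
  have hss : sq * sq = ρ s + ρ t := by
    rw [← hmD, hsqdef, specD_mul]
    exact specD_congr hm fun i => by
      rw [← Complex.ofReal_mul, Real.mul_self_sqrt (hev i)]
  have hPm : Pm * (ρ s + ρ t) = ρ s + ρ t := by
    rw [← hmD, hPmdef, specD_mul]
    exact specD_congr hm fun i => by
      by_cases h : hm.1.eigenvalues i = 0 <;> simp [h]
  have hmP : (ρ s + ρ t) * Pm = ρ s + ρ t := by
    rw [← hmD, hPmdef, specD_mul]
    exact specD_congr hm fun i => by
      by_cases h : hm.1.eigenvalues i = 0 <;> simp [h]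
  have hmH : (ρ s + ρ t)ᴴ = ρ s + ρ t := hm.1
  -- support facts
  have hsupport : ∀ X : Matrix n n ℂ, X.PosSemidef → ((ρ s + ρ t) - X).PosSemidef →
      X * Pm = X ∧ Pm * X = X := by
    intro X hX hmX
    have hPcH : (1 - Pm)ᴴ = 1 - Pm := by
      rw [Matrix.conjTranspose_sub, Matrix.conjTranspose_one, hPH]
    have hmPc : (ρ s + ρ t) * (1 - Pm) = 0 := by
      rw [Matrix.mul_sub, Matrix.mul_one, hmP, sub_self]
    have hsum0 : (1 - Pm) * X * (1 - Pm)ᴴ + (1 - Pm) * ((ρ s + ρ t) - X) * (1 - Pm)ᴴ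
        = 0 := by
      have e : (1 - Pm) * X * (1 - Pm)ᴴ + (1 - Pm) * ((ρ s + ρ t) - X) * (1 - Pm)ᴴ
          = (1 - Pm) * ((ρ s + ρ t) * (1 - Pm)ᴴ) := by noncomm_ring
      rw [e, hPcH, hmPc, Matrix.mul_zero]
    have hX' : ((1 - Pm) * X * (1 - Pm)ᴴ).PosSemidef := hX.mul_mul_conjTranspose_same _
    have hY' : ((1 - Pm) * ((ρ s + ρ t) - X) * (1 - Pm)ᴴ).PosSemidef :=
      hmX.mul_mul_conjTranspose_same _
    have htr : ((1 - Pm) * X * (1 - Pm)ᴴ).trace = 0 := by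
      have h0 : ((1 - Pm) * X * (1 - Pm)ᴴ).trace
          + ((1 - Pm) * ((ρ s + ρ t) - X) * (1 - Pm)ᴴ).trace = 0 := by
        rw [← Matrix.trace_add, hsum0, Matrix.trace_zero]
      have h1 := psd_trace_nonneg hX'
      have h2 := psd_trace_nonneg hY'
      have h3 : ((1 - Pm) * X * (1 - Pm)ᴴ).trace ≤ 0 := by
        rw [eq_neg_of_add_eq_zero_left h0]
        exact neg_nonpos.mpr h2
      exact le_antisymm h3 h1
    have hX'0 : (1 - Pm) * X * (1 - Pm)ᴴ = 0 := psd_trace_eq_zero hX' htr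
    -- now deduce X * (1 - Pm) = 0
    obtain ⟨R, hqq, hqH⟩ : ∃ R : Matrix n n ℂ, R * R = X ∧ Rᴴ = R := by
      open MatrixOrder in
      exact ⟨CFC.sqrt X, CFC.sqrt_mul_sqrt_self X hX.nonneg, (CFC.sqrt_nonneg X).posSemidef.1⟩
    have hq0 : R * (1 - Pm) = 0 := by
      apply Matrix.conjTranspose_mul_self_eq_zero.mp
      rw [Matrix.conjTranspose_mul, hqH, hPcH]
      rw [hPcH] at hX'0
      calc (1 - Pm) * R * (R * (1 - Pm))
          = (1 - Pm) * (R * R) * (1 - Pm) := by simp only [Matrix.mul_assoc]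
        _ = 0 := by rw [hqq, hX'0]
    have hXPc : X * (1 - Pm) = 0 := by
      rw [← hqq, Matrix.mul_assoc, hq0, Matrix.mul_zero]
    have hXP : X * Pm = X := by
      rw [Matrix.mul_sub, Matrix.mul_one] at hXPc
      exact (sub_eq_zero.mp hXPc).symm
    refine ⟨hXP, ?_⟩
    have := congrArg Matrix.conjTranspose hXP
    rw [Matrix.conjTranspose_mul, hPH, hX.1] at this
    exact this
  obtain ⟨hrP, hPr⟩ := hsupport (ρ s) hρ1 (by
    have e : (ρ s + ρ t) - ρ s = ρ t := by abel
    rw [e]; exact hρ2)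
  obtain ⟨hr2P, hPr2⟩ := hsupport (ρ t) hρ2 (by
    have e : (ρ s + ρ t) - ρ t = ρ s := by abel
    rw [e]; exact hρ1)
  have hmPSD : ((ρ s + ρ t)).PosSemidef := hm
  -- B side sums
  have hAAB : ∑ k : c × e, (sliceB V k)ᴴ * sliceB V k = (1 : Matrix n n ℂ) := by
    rw [sliceB_sq, hiso]
  have hAAC : ∑ l : b × e, (sliceC V l)ᴴ * sliceC V l = (1 : Matrix n n ℂ) := by
    rw [sliceC_sq, hiso]
  have hsumB : ∀ u, ∑ k : c × e, sliceB V k * ρ u * (sliceB V k)ᴴ = WB * ρ u * WBᴴ :=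
    fun u => (sumB V (ρ u)).symm.trans (hbroadB u)
  have hsumC : ∀ u, ∑ l : b × e, sliceC V l * ρ u * (sliceC V l)ᴴ = WC * ρ u * WCᴴ :=
    fun u => (sumC V (ρ u)).symm.trans (hbroadC u)
  have hsumBm : ∑ k : c × e, sliceB V k * (ρ s + ρ t) * (sliceB V k)ᴴ
      = WB * (ρ s + ρ t) * WBᴴ := by
    have e : ∀ k : c × e, sliceB V k * (ρ s + ρ t) * (sliceB V k)ᴴ
        = sliceB V k * ρ s * (sliceB V k)ᴴ + sliceB V k * ρ t * (sliceB V k)ᴴ := by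
      intro k; rw [Matrix.mul_add, Matrix.add_mul]
    rw [Finset.sum_congr rfl fun k _ => e k, Finset.sum_add_distrib, hsumB s, hsumB t,
      Matrix.mul_add, Matrix.add_mul]
  have hsumCm : ∑ l : b × e, sliceC V l * (ρ s + ρ t) * (sliceC V l)ᴴ
      = WC * (ρ s + ρ t) * WCᴴ := by
    have e : ∀ l : b × e, sliceC V l * (ρ s + ρ t) * (sliceC V l)ᴴ
        = sliceC V l * ρ s * (sliceC V l)ᴴ + sliceC V l * ρ t * (sliceC V l)ᴴ := by
      intro l; rw [Matrix.mul_add, Matrix.add_mul]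
    rw [Finset.sum_congr rfl fun l _ => e l, Finset.sum_add_distrib, hsumC s, hsumC t,
      Matrix.mul_add, Matrix.add_mul]
  -- the two side commutation results
  have hB := side_commute (sliceB V) WB hWB hAAB Pm (ρ s + ρ t) sq (ρ s) minv
    hPH hmH hρ1.1 hsH hss hminvH hmminv hminvm hminvP hPminv hPr hrP hPP hPm hmP
    hmPSD hsumBm (hsumB s)
  have hC := side_commute (sliceC V) WC hWC hAAC Pm (ρ s + ρ t) sq (ρ s) minv
    hPH hmH hρ1.1 hsH hss hminvH hmminv hminvm hminvP hPminv hPr hrP hPP hPm hmP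
    hmPSD hsumCm (hsumC s)
  -- swap argument : a := ρ s * minv is normal
  have hswap := swap_comm V Pm (ρ s * minv) (minv * ρ s)
    (WB * (ρ s * minv) * WBᴴ) (WC * (minv * ρ s) * WCᴴ)
    (entryB V Pm (ρ s * minv) _ fun k => (hB k).1)
    (entryC V Pm (minv * ρ s) _ fun l => (hC l).2)
  have hcancel : ∀ X : Matrix n n ℂ, Vᴴ * ((V * Pm) * X) = Pm * X := by
    intro X
    rw [Matrix.mul_assoc V Pm X, ← Matrix.mul_assoc Vᴴ V, hiso, Matrix.one_mul]
  have hnormal : (ρ s * minv) * (minv * ρ s) = (minv * ρ s) * (ρ s * minv) := by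
    have h := congrArg (fun Z => Vᴴ * Z) hswap
    simp only [hcancel] at h
    have hP1 : Pm * ((ρ s * minv) * (minv * ρ s)) = (ρ s * minv) * (minv * ρ s) := by
      rw [← Matrix.mul_assoc, ← Matrix.mul_assoc Pm (ρ s) minv, hPr]
    have hP2 : Pm * ((minv * ρ s) * (ρ s * minv)) = (minv * ρ s) * (ρ s * minv) := by
      rw [← Matrix.mul_assoc, ← Matrix.mul_assoc Pm minv (ρ s), hPminv]
    rw [hP1, hP2] at h
    exact h
  -- endgame: a = aᴴ
  have haH : (ρ s * minv)ᴴ = minv * ρ s := by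
    rw [Matrix.conjTranspose_mul, hminvH, hρ1.1]
  have haP : (ρ s * minv) * Pm = ρ s * minv := by rw [Matrix.mul_assoc, hminvP]
  have haHP : (minv * ρ s) * Pm = minv * ρ s := by rw [Matrix.mul_assoc, hrP]
  have ham : (ρ s * minv) * (ρ s + ρ t) = ρ s := by
    rw [Matrix.mul_assoc, hminvm, hrP]
  have hmaH : (ρ s + ρ t) * (minv * ρ s) = ρ s := by
    rw [← Matrix.mul_assoc, hmminv, hPr]
  -- trace of (a - aᴴ)ᴴ m (a - aᴴ) vanishes
  obtain ⟨G, hG⟩ : ∃ G : Matrix n n ℂ, G = ρ s * minv - minv * ρ s := ⟨_, rfl⟩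
  have hGH : Gᴴ = minv * ρ s - ρ s * minv := by
    rw [hG, Matrix.conjTranspose_sub, haH, ← haH, Matrix.conjTranspose_conjTranspose]
  have htr0 : ((ρ s + ρ t) * (Gᴴ * G)).trace = 0 := by
    have expand : Gᴴ * G = (minv * ρ s) * (ρ s * minv) - (minv * ρ s) * (minv * ρ s)
        - (ρ s * minv) * (ρ s * minv) + (ρ s * minv) * (minv * ρ s) := by
      rw [hGH, hG]; noncomm_ring
    rw [expand]
    simp only [Matrix.mul_sub, Matrix.mul_add, Matrix.trace_sub, Matrix.trace_add]
    have T1 : ((ρ s + ρ t) * ((minv * ρ s) * (ρ s * minv))).trace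
        = (ρ s * (ρ s * minv)).trace := by
      rw [← Matrix.mul_assoc, hmaH]
    have T2 : ((ρ s + ρ t) * ((minv * ρ s) * (minv * ρ s))).trace
        = (ρ s * (minv * ρ s)).trace := by
      rw [← Matrix.mul_assoc, hmaH]
    have T4 : ((ρ s + ρ t) * ((ρ s * minv) * (minv * ρ s))).trace
        = (ρ s * (ρ s * minv)).trace := by
      rw [hnormal, ← Matrix.mul_assoc, hmaH]
    have T3 : ((ρ s + ρ t) * ((ρ s * minv) * (ρ s * minv))).trace
        = (ρ s * (ρ s * minv)).trace := by
      calc ((ρ s + ρ t) * ((ρ s * minv) * (ρ s * minv))).trace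
          = (((ρ s + ρ t) * (ρ s * minv)) * (ρ s * minv)).trace := by
            rw [← Matrix.mul_assoc (ρ s + ρ t) (ρ s * minv) (ρ s * minv)]
        _ = ((ρ s * minv) * ((ρ s + ρ t) * (ρ s * minv))).trace := by
            rw [Matrix.trace_mul_comm]
        _ = (ρ s * (ρ s * minv)).trace := by
            rw [← Matrix.mul_assoc, Matrix.mul_assoc (ρ s) minv, hminvm, hrP]
    rw [T1, T2, T3, T4]
    have heq : (ρ s * (ρ s * minv)).trace = (ρ s * (minv * ρ s)).trace := by
      rw [Matrix.trace_mul_comm (ρ s) (ρ s * minv), ← Matrix.mul_assoc (ρ s) minv (ρ s)]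
    rw [heq]
    ring
  -- kill G
  have hGP : G * Pm = G := by rw [hG, Matrix.sub_mul, haP, haHP]
  have hGsq : G * sq = 0 := by
    apply eq_zero_of_trace_self_mul_conjTranspose
    have e : (G * sq) * (G * sq)ᴴ = G * (ρ s + ρ t) * Gᴴ := by
      rw [Matrix.conjTranspose_mul, hsH, ← hss]
      simp only [Matrix.mul_assoc]
    rw [e]
    calc (G * (ρ s + ρ t) * Gᴴ).trace = ((ρ s + ρ t) * (Gᴴ * G)).trace := by
          rw [Matrix.mul_assoc, Matrix.trace_mul_comm, Matrix.mul_assoc]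
      _ = 0 := htr0
  have hG0 : G = 0 := by
    have h1 : G * (ρ s + ρ t) = 0 := by
      rw [← hss, ← Matrix.mul_assoc, hGsq, Matrix.zero_mul]
    have h2 : G * Pm = 0 := by
      rw [← hmminv, ← Matrix.mul_assoc, h1, Matrix.zero_mul]
    rw [← hGP, h2]
  have hcomm : ρ s * minv = minv * ρ s := by
    have h1 : ρ s * minv - minv * ρ s = 0 := by rw [← hG, hG0]
    exact sub_eq_zero.mp h1
  have h1 : (ρ s + ρ t) * (ρ s * minv) * (ρ s + ρ t)
      = (ρ s + ρ t) * (minv * ρ s) * (ρ s + ρ t) := by rw [hcomm]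
  have L : (ρ s + ρ t) * (ρ s * minv) * (ρ s + ρ t) = (ρ s + ρ t) * ρ s := by
    rw [Matrix.mul_assoc, Matrix.mul_assoc (ρ s) minv, hminvm, hrP]
  have R : (ρ s + ρ t) * (minv * ρ s) * (ρ s + ρ t) = ρ s * (ρ s + ρ t) := by
    rw [← Matrix.mul_assoc (ρ s + ρ t) minv (ρ s), hmminv, hPr]
  have hmr : (ρ s + ρ t) * ρ s = ρ s * (ρ s + ρ t) := by rw [← L, ← R, h1]
  have h2 : ρ s * ρ s + ρ t * ρ s = ρ s * ρ s + ρ s * ρ t := by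
    calc ρ s * ρ s + ρ t * ρ s = (ρ s + ρ t) * ρ s := by rw [Matrix.add_mul]
      _ = ρ s * (ρ s + ρ t) := hmr
      _ = ρ s * ρ s + ρ s * ρ t := by rw [Matrix.mul_add]
  exact (add_left_cancel h2).symm
end
end
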